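/- arXiv:2207.11042 — 7 statements merged into one kernel-verified Lean document; each statement's English description precedes it below -/
import Mathlib

section
/- Let M, N be compact metric spaces, μ a probability measure on M, and ν₀, ν₁ probability measures on N. Let c : M × N → ℝ be a cost function, T₀, T₁ : M → N measurable maps with (T_i)_# μ = ν_i, each T_i induced by a potential ψ_i : N → ℝ (meaning T_i(x) minimizes y ↦ c(x,y) - ψ_i(y) for all x). Assume ψ₀ is Lipschitz and c-concave, ψ₁ is Lipschitz and strongly c-concave with modulus ω (i.e., for x ∈ ∂^c ψ₁(y): ψ₁(z) - c(x,z) ≤ ψ₁(y) - c(x,y) - ω(d_N(y,z))). Then ∫_M ω(d_N(T₀(x), T₁(x))) dμ(x) ≤ (Lip(ψ₀) + Lip(ψ₁)) · W₁(ν₀, ν₁), where W₁ is the 1-Wasserstein distance on N. -/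
open MeasureTheory

/-- A coupling of `μ` and `ν`. -/
def IsCoupling {M N : Type*} [MeasurableSpace M] [MeasurableSpace N]
    (γ : Measure (M × N)) (μ : Measure M) (ν : Measure N) : Prop :=
  γ.fst = μ ∧ γ.snd = ν

/-- The 1-Wasserstein distance between two measures on a metric space. -/
noncomputable def W1 {N : Type*} [MeasurableSpace N] [PseudoMetricSpace N]
    (ν₀ ν₁ : Measure N) : ℝ :=
  sInf {r | ∃ γ : Measure (N × N), IsCoupling γ ν₀ ν₁ ∧ r = ∫ p, dist p.1 p.2 ∂γ}

/-- The c-superdifferential of `ψ` at `y`. -/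
def cSuperdiff {M N : Type*} (c : M → N → ℝ) (ψ : N → ℝ) (y : N) : Set M :=
  {x | ∀ z, ψ z - c x z ≤ ψ y - c x y}

lemma integrable_of_bdd' {α : Type*} [MeasurableSpace α] {μ : Measure α} [IsFiniteMeasure μ]
    {f : α → ℝ} (hm : AEStronglyMeasurable f μ) (C : ℝ) (h : ∀ x, |f x| ≤ C) :
    Integrable f μ :=
  Integrable.mono' (integrable_const C) hm
    (ae_of_all _ (fun x => by simpa [Real.norm_eq_abs] using h x))

lemma bdd_of_cont {N : Type*} [MetricSpace N] [CompactSpace N] (f : N → ℝ) (hf : Continuous f) :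
    ∃ C, ∀ y, |f y| ≤ C := by
  obtain ⟨C, hC⟩ := isCompact_univ.exists_bound_of_continuousOn hf.continuousOn
  exact ⟨C, fun y => by simpa [Real.norm_eq_abs] using hC y (Set.mem_univ y)⟩

/-- Stability of optimal transport maps with respect to the target measure, under strong
c-concavity of the Kantorovich potential. -/
theorem stability_target_strong_cconcave
    {M N : Type*} [MetricSpace M] [MetricSpace N] [CompactSpace M] [CompactSpace N]
    [MeasurableSpace M] [BorelSpace M] [MeasurableSpace N] [BorelSpace N]
    (μ : Measure M) (ν₀ ν₁ : Measure N)
    [IsProbabilityMeasure μ] [IsProbabilityMeasure ν₀] [IsProbabilityMeasure ν₁]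
    (c : M → N → ℝ) (T₀ T₁ : M → N) (hT₀m : Measurable T₀) (hT₁m : Measurable T₁)
    (hpush₀ : Measure.map T₀ μ = ν₀) (hpush₁ : Measure.map T₁ μ = ν₁)
    (ψ₀ ψ₁ : N → ℝ) (K₀ K₁ : NNReal)
    (hψ₀lip : LipschitzWith K₀ ψ₀) (hψ₁lip : LipschitzWith K₁ ψ₁)
    -- `T_i` is induced by the potential `ψ_i`
    (hind₀ : ∀ x : M, ∀ y : N, c x (T₀ x) - ψ₀ (T₀ x) ≤ c x y - ψ₀ y)
    (hind₁ : ∀ x : M, ∀ y : N, c x (T₁ x) - ψ₁ (T₁ x) ≤ c x y - ψ₁ y)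
    -- `ψ₀` is c-concave
    (hconc₀ : ∀ y : N, (cSuperdiff c ψ₀ y).Nonempty)
    -- `ψ₁` is strongly c-concave with modulus `ω`
    (ω : ℝ → ℝ) (hmono : Monotone ω) (hω0 : ω 0 = 0)
    (hstrong : ∀ (x : M) (y z : N), x ∈ cSuperdiff c ψ₁ y →
      ψ₁ z - c x z ≤ ψ₁ y - c x y - ω (dist y z)) :
    ∫ x, ω (dist (T₀ x) (T₁ x)) ∂μ ≤ ((K₀ : ℝ) + (K₁ : ℝ)) * W1 ν₀ ν₁ := by
  -- basic boundedness data
  have hψ₀c : Continuous ψ₀ := hψ₀lip.continuous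
  have hψ₁c : Continuous ψ₁ := hψ₁lip.continuous
  obtain ⟨C₀, hC₀⟩ := bdd_of_cont ψ₀ hψ₀c
  obtain ⟨C₁, hC₁⟩ := bdd_of_cont ψ₁ hψ₁c
  have hD : ∀ y z : N, dist y z ≤ Metric.diam (Set.univ : Set N) :=
    fun y z => Metric.dist_le_diam_of_mem isCompact_univ.isBounded trivial trivial
  set D := Metric.diam (Set.univ : Set N) with hDdef
  -- pointwise estimate
  set g : M → ℝ := fun x => (ψ₁ (T₁ x) - ψ₁ (T₀ x)) + (ψ₀ (T₀ x) - ψ₀ (T₁ x)) with hg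
  have hpt : ∀ x, ω (dist (T₀ x) (T₁ x)) ≤ g x := by
    intro x
    have hx : x ∈ cSuperdiff c ψ₁ (T₁ x) := by
      intro z; have := hind₁ x z; linarith
    have h1 := hstrong x (T₁ x) (T₀ x) hx
    have h2 := hind₀ x (T₁ x)
    rw [dist_comm (T₁ x) (T₀ x)] at h1
    simp only [hg]
    linarith
  -- integrability
  have hωmeas : Measurable ω := hmono.measurable
  have hmeas1 : Measurable fun x => ω (dist (T₀ x) (T₁ x)) :=
    hωmeas.comp ((hT₀m.dist hT₁m))
  have hint1 : Integrable (fun x => ω (dist (T₀ x) (T₁ x))) μ := by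
    refine integrable_of_bdd' hmeas1.aestronglyMeasurable (|ω 0| + |ω D|) (fun x => ?_)
    have h1 : ω 0 ≤ ω (dist (T₀ x) (T₁ x)) := hmono dist_nonneg
    have h2 : ω (dist (T₀ x) (T₁ x)) ≤ ω D := hmono (hD _ _)
    rw [abs_le]
    constructor
    · have h3 := neg_abs_le (ω 0); have h4 := abs_nonneg (ω D); linarith
    · have h3 := le_abs_self (ω D); have h4 := abs_nonneg (ω 0); linarith
  have hintψ : ∀ (ψ : N → ℝ) (C : ℝ), Continuous ψ → (∀ y, |ψ y| ≤ C) →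
      ∀ (T : M → N), Measurable T → Integrable (fun x => ψ (T x)) μ := by
    intro ψ C hc hb T hT
    exact integrable_of_bdd' (hc.measurable.comp hT).aestronglyMeasurable C (fun x => hb _)
  have hi₁₁ := hintψ ψ₁ C₁ hψ₁c hC₁ T₁ hT₁m
  have hi₁₀ := hintψ ψ₁ C₁ hψ₁c hC₁ T₀ hT₀m
  have hi₀₀ := hintψ ψ₀ C₀ hψ₀c hC₀ T₀ hT₀m
  have hi₀₁ := hintψ ψ₀ C₀ hψ₀c hC₀ T₁ hT₁m
  have hintg : Integrable g μ := ((hi₁₁.sub hi₁₀).add (hi₀₀.sub hi₀₁))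
  -- step 1: integral comparison
  have step1 : ∫ x, ω (dist (T₀ x) (T₁ x)) ∂μ ≤ ∫ x, g x ∂μ :=
    integral_mono hint1 hintg hpt
  -- step 2: rewrite ∫ g in terms of ν₀, ν₁
  have hmap : ∀ (ψ : N → ℝ), Continuous ψ → ∀ (T : M → N) (hT : Measurable T) (ν : Measure N),
      Measure.map T μ = ν → ∫ x, ψ (T x) ∂μ = ∫ y, ψ y ∂ν := by
    intro ψ hc T hT ν hν
    rw [← hν, integral_map hT.aemeasurable hc.aestronglyMeasurable]
  have step2 : ∫ x, g x ∂μ =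
      ((∫ y, ψ₁ y ∂ν₁) - (∫ y, ψ₁ y ∂ν₀)) + ((∫ y, ψ₀ y ∂ν₀) - (∫ y, ψ₀ y ∂ν₁)) := by
    have e₁ : Integrable (fun x => ψ₁ (T₁ x) - ψ₁ (T₀ x)) μ := hi₁₁.sub hi₁₀
    have e₂ : Integrable (fun x => ψ₀ (T₀ x) - ψ₀ (T₁ x)) μ := hi₀₀.sub hi₀₁
    simp only [hg]
    rw [integral_add e₁ e₂, integral_sub hi₁₁ hi₁₀,
      integral_sub hi₀₀ hi₀₁, hmap ψ₁ hψ₁c T₁ hT₁m ν₁ hpush₁, hmap ψ₁ hψ₁c T₀ hT₀m ν₀ hpush₀,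
      hmap ψ₀ hψ₀c T₀ hT₀m ν₀ hpush₀, hmap ψ₀ hψ₀c T₁ hT₁m ν₁ hpush₁]
  set A : ℝ := ((∫ y, ψ₁ y ∂ν₁) - (∫ y, ψ₁ y ∂ν₀)) + ((∫ y, ψ₀ y ∂ν₀) - (∫ y, ψ₀ y ∂ν₁))
    with hA
  -- step 3: for any coupling, A ≤ (K₀+K₁) * transport cost
  have step3 : ∀ r ∈ {r | ∃ γ : Measure (N × N), IsCoupling γ ν₀ ν₁ ∧
      r = ∫ p, dist p.1 p.2 ∂γ}, A ≤ ((K₀ : ℝ) + (K₁ : ℝ)) * r := by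
    rintro r ⟨γ, ⟨hγ₀, hγ₁⟩, rfl⟩
    haveI : IsProbabilityMeasure γ := by
      constructor
      have : γ.fst Set.univ = 1 := by rw [hγ₀]; exact measure_univ
      rwa [Measure.fst_univ] at this
    have hmapfst : ∫ y, ψ₀ y ∂ν₀ = ∫ p, ψ₀ p.1 ∂γ := by
      rw [← hγ₀, Measure.fst, integral_map measurable_fst.aemeasurable
        hψ₀c.aestronglyMeasurable]
    have hmapfst1 : ∫ y, ψ₁ y ∂ν₀ = ∫ p, ψ₁ p.1 ∂γ := by
      rw [← hγ₀, Measure.fst, integral_map measurable_fst.aemeasurable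
        hψ₁c.aestronglyMeasurable]
    have hmapsnd : ∫ y, ψ₀ y ∂ν₁ = ∫ p, ψ₀ p.2 ∂γ := by
      rw [← hγ₁, Measure.snd, integral_map measurable_snd.aemeasurable
        hψ₀c.aestronglyMeasurable]
    have hmapsnd1 : ∫ y, ψ₁ y ∂ν₁ = ∫ p, ψ₁ p.2 ∂γ := by
      rw [← hγ₁, Measure.snd, integral_map measurable_snd.aemeasurable
        hψ₁c.aestronglyMeasurable]
    have hintdist : Integrable (fun p : N × N => dist p.1 p.2) γ := by
      refine integrable_of_bdd' ((continuous_fst.dist continuous_snd).aestronglyMeasurable) D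
        (fun p => by rw [abs_of_nonneg dist_nonneg]; exact hD _ _)
    have hj₁₂ : Integrable (fun p : N × N => ψ₁ p.2) γ :=
      integrable_of_bdd' ((hψ₁c.comp continuous_snd).aestronglyMeasurable) C₁ (fun p => hC₁ _)
    have hj₁₁ : Integrable (fun p : N × N => ψ₁ p.1) γ :=
      integrable_of_bdd' ((hψ₁c.comp continuous_fst).aestronglyMeasurable) C₁ (fun p => hC₁ _)
    have hj₀₁ : Integrable (fun p : N × N => ψ₀ p.1) γ :=
      integrable_of_bdd' ((hψ₀c.comp continuous_fst).aestronglyMeasurable) C₀ (fun p => hC₀ _)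
    have hj₀₂ : Integrable (fun p : N × N => ψ₀ p.2) γ :=
      integrable_of_bdd' ((hψ₀c.comp continuous_snd).aestronglyMeasurable) C₀ (fun p => hC₀ _)
    have hi1 : Integrable (fun p : N × N => ψ₁ p.2 - ψ₁ p.1) γ := hj₁₂.sub hj₁₁
    have hi0 : Integrable (fun p : N × N => ψ₀ p.1 - ψ₀ p.2) γ := hj₀₁.sub hj₀₂
    have key1 : (∫ y, ψ₁ y ∂ν₁) - (∫ y, ψ₁ y ∂ν₀)
        ≤ (K₁ : ℝ) * ∫ p, dist p.1 p.2 ∂γ := by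
      rw [hmapsnd1, hmapfst1, ← integral_sub hj₁₂ hj₁₁, ← integral_const_mul]
      refine integral_mono hi1 (hintdist.const_mul _) (fun p => ?_)
      have h1 := hψ₁lip.dist_le_mul p.2 p.1
      have h := le_abs_self (ψ₁ p.2 - ψ₁ p.1)
      rw [Real.dist_eq] at h1
      rw [dist_comm p.2 p.1] at h1
      have h2 := abs_sub_abs_le_abs_sub (ψ₁ p.2) (ψ₁ p.1)
      linarith [h1.trans_eq rfl, h.trans h1]
    have key0 : (∫ y, ψ₀ y ∂ν₀) - (∫ y, ψ₀ y ∂ν₁)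
        ≤ (K₀ : ℝ) * ∫ p, dist p.1 p.2 ∂γ := by
      rw [hmapfst, hmapsnd, ← integral_sub hj₀₁ hj₀₂, ← integral_const_mul]
      refine integral_mono hi0 (hintdist.const_mul _) (fun p => ?_)
      have h1 := hψ₀lip.dist_le_mul p.1 p.2
      have h := le_abs_self (ψ₀ p.1 - ψ₀ p.2)
      rw [Real.dist_eq] at h1
      linarith [h.trans h1]
    rw [hA]
    linarith [key0, key1]
  -- nonemptiness of the coupling set
  have hne : {r | ∃ γ : Measure (N × N), IsCoupling γ ν₀ ν₁ ∧
      r = ∫ p, dist p.1 p.2 ∂γ}.Nonempty := by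
    refine ⟨∫ p, dist p.1 p.2 ∂(ν₀.prod ν₁), ν₀.prod ν₁, ⟨?_, ?_⟩, rfl⟩
    · exact Measure.fst_prod
    · exact Measure.snd_prod
  -- step 4: conclude
  have step4 : A ≤ ((K₀ : ℝ) + (K₁ : ℝ)) * W1 ν₀ ν₁ := by
    set K : ℝ := (K₀ : ℝ) + (K₁ : ℝ) with hK
    have hK0 : 0 ≤ K := by positivity
    rcases eq_or_lt_of_le hK0 with hKeq | hKpos
    · obtain ⟨r, hr⟩ := hne
      have := step3 r hr
      rw [← hKeq] at this ⊢
      simpa using this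
    · rw [W1]
      rw [mul_comm, ← div_le_iff₀ hKpos]
      refine le_csInf hne (fun r hr => ?_)
      rw [div_le_iff₀ hKpos, mul_comm]
      exact step3 r hr
  calc ∫ x, ω (dist (T₀ x) (T₁ x)) ∂μ ≤ ∫ x, g x ∂μ := step1
    _ = A := step2
    _ ≤ _ := step4
end

section
/- Let M, N be compact metric spaces and c : M × N → ℝ a Lipschitz cost function. Then the optimal transport cost functional T^c(μ, ν) = min over γ ∈ Γ(μ,ν) of ∫ c dγ satisfies |T^c(μ, ν) − T^c(μ̃, ν̃)| ≤ Lip(c) · (W₁(μ, μ̃) + W₁(ν, ν̃)) for all probability measures μ, μ̃ on M and ν, ν̃ on N. -/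
open MeasureTheory

/-- The optimal transport cost between `μ` and `ν` for the cost `c`. -/
noncomputable def transportCost {M N : Type*} [MeasurableSpace M] [MeasurableSpace N]
    (c : M → N → ℝ) (μ : Measure M) (ν : Measure N) : ℝ :=
  sInf {r | ∃ γ : Measure (M × N), IsCoupling γ μ ν ∧ r = ∫ p, c p.1 p.2 ∂γ}

section Aux

open ProbabilityTheory

/-- A continuous real function on a compact space is integrable w.r.t. a finite measure. -/
lemma integrable_of_cont {α : Type*} [TopologicalSpace α] [CompactSpace α]
    [MeasurableSpace α] [OpensMeasurableSpace α] (μ : Measure α) [IsFiniteMeasure μ]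
    {f : α → ℝ} (hf : Continuous f) : Integrable f μ := by
  obtain ⟨C, hC⟩ := isBounded_iff_forall_norm_le.1 (isCompact_range hf).isBounded
  exact (integrable_const C).mono' hf.aestronglyMeasurable
    (Filter.Eventually.of_forall fun x => hC _ ⟨x, rfl⟩)

lemma isProbabilityMeasure_of_fst {α β : Type*} [MeasurableSpace α] [MeasurableSpace β]
    {γ : Measure (α × β)} {μ : Measure α} [IsProbabilityMeasure μ] (h : γ.fst = μ) :
    IsProbabilityMeasure γ := by
  constructor
  have h1 : γ.fst Set.univ = 1 := by rw [h]; exact measure_univ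
  rwa [Measure.fst_apply MeasurableSet.univ, Set.preimage_univ] at h1

variable {X Y : Type*} [MetricSpace X] [MetricSpace Y] [CompactSpace X] [CompactSpace Y]
    [MeasurableSpace X] [BorelSpace X] [MeasurableSpace Y] [BorelSpace Y]

/-- Gluing: replace the first marginal of a coupling using a transport plan `π`. -/
lemma step_fst (c : X → Y → ℝ) (hc : Continuous fun p : X × Y => c p.1 p.2)
    (L : ℝ) (hlip : ∀ x x' y, c x y ≤ c x' y + L * dist x x')
    (γ : Measure (X × Y)) [IsProbabilityMeasure γ]
    (π : Measure (X × X)) [IsProbabilityMeasure π] (hπ : π.fst = γ.fst) :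
    ∃ γ' : Measure (X × Y), γ'.fst = π.snd ∧ γ'.snd = γ.snd ∧
      ∫ p, c p.1 p.2 ∂γ' ≤ ∫ p, c p.1 p.2 ∂γ + L * ∫ p, dist p.1 p.2 ∂π := by
  have hYne : Nonempty Y := by
    rcases isEmpty_or_nonempty Y with hY | hY
    · exfalso
      have h1 : γ Set.univ = 1 := measure_univ
      rw [Set.univ_eq_empty_iff.mpr inferInstance, measure_empty] at h1
      exact zero_ne_one h1
    · exact hY
  set κ : Kernel X Y := γ.condKernel with hκdef
  have hdis : γ.fst ⊗ₘ κ = γ := γ.disintegrate κ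
  set κ' : Kernel (X × X) Y := κ.comap Prod.fst measurable_fst with hκ'def
  set η : Measure ((X × X) × Y) := π ⊗ₘ κ' with hηdef
  have hηprob : IsProbabilityMeasure η := by infer_instance
  set g : (X × X) × Y → X × Y := fun q => (q.1.2, q.2) with hgdef
  have hg : Measurable g := (measurable_snd.comp measurable_fst).prodMk measurable_snd
  have hηfst : η.map Prod.fst = π := Measure.fst_compProd π κ'
  -- continuity of the various integrands
  have hcont1 : Continuous fun q : (X × X) × Y => c q.1.2 q.2 :=
    hc.comp ((continuous_snd.comp continuous_fst).prodMk continuous_snd)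
  have hcont2 : Continuous fun q : (X × X) × Y => c q.1.1 q.2 :=
    hc.comp ((continuous_fst.comp continuous_fst).prodMk continuous_snd)
  have hcont3 : Continuous fun q : (X × X) × Y => L * dist q.1.1 q.1.2 :=
    continuous_const.mul ((continuous_fst.comp continuous_fst).dist
      (continuous_snd.comp continuous_fst))
  refine ⟨η.map g, ?_, ?_, ?_⟩
  · -- first marginal
    show (η.map g).fst = π.snd
    rw [Measure.fst, Measure.map_map measurable_fst hg]
    have heq : (Prod.fst ∘ g) = (Prod.snd ∘ (Prod.fst : (X × X) × Y → X × X)) := rfl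
    rw [heq, ← Measure.map_map measurable_snd measurable_fst, hηfst]
    rfl
  · -- second marginal
    have hsnd : η.snd = (γ.fst ⊗ₘ κ).snd := by
      ext s hs
      rw [Measure.snd_apply hs, Measure.snd_apply hs,
        Measure.compProd_apply (measurable_snd hs), Measure.compProd_apply (measurable_snd hs)]
      have hpre : ∀ (p : X × X), (Prod.mk p ⁻¹' (Prod.snd ⁻¹' s)) = s := fun p => rfl
      have hpre' : ∀ (x : X), (Prod.mk x ⁻¹' (Prod.snd ⁻¹' s)) = s := fun x => rfl
      simp only [hpre, hpre', hκ'def, Kernel.comap_apply]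
      rw [← hπ, Measure.fst, lintegral_map (κ.measurable_coe hs) measurable_fst]
    show (η.map g).snd = γ.snd
    rw [Measure.snd, Measure.map_map measurable_snd hg]
    have heq : (Prod.snd ∘ g) = (Prod.snd : (X × X) × Y → Y) := rfl
    rw [heq]
    show η.snd = γ.snd
    rw [hsnd, hdis]
  · -- cost estimate
    have hint1 : Integrable (fun q : (X × X) × Y => c q.1.2 q.2) η := integrable_of_cont η hcont1
    have hint2 : Integrable (fun q : (X × X) × Y => c q.1.1 q.2) η := integrable_of_cont η hcont2
    have hint3 : Integrable (fun q : (X × X) × Y => L * dist q.1.1 q.1.2) η :=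
      integrable_of_cont η hcont3
    have hmap : ∫ p, c p.1 p.2 ∂(η.map g) = ∫ q, c q.1.2 q.2 ∂η := by
      rw [integral_map hg.aemeasurable]
      exact (hc.aestronglyMeasurable)
    have hmono : ∫ q, c q.1.2 q.2 ∂η
        ≤ ∫ q, (c q.1.1 q.2 + L * dist q.1.1 q.1.2) ∂η := by
      refine integral_mono hint1 (hint2.add hint3) fun q => ?_
      have := hlip q.1.2 q.1.1 q.2
      rwa [dist_comm] at this
    have hadd : ∫ q, (c q.1.1 q.2 + L * dist q.1.1 q.1.2) ∂η
        = ∫ q, c q.1.1 q.2 ∂η + ∫ q, L * dist q.1.1 q.1.2 ∂η := integral_add hint2 hint3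
    -- second term
    have h3 : ∫ q, L * dist q.1.1 q.1.2 ∂η = L * ∫ p, dist p.1 p.2 ∂π := by
      rw [integral_const_mul]
      congr 1
      have : ∫ p, dist p.1 p.2 ∂(η.map Prod.fst)
          = ∫ q : (X × X) × Y, dist q.1.1 q.1.2 ∂η := by
        rw [integral_map measurable_fst.aemeasurable]
        exact (continuous_fst.dist continuous_snd).aestronglyMeasurable
      rw [← this, hηfst]
    -- first term
    have hγint : Integrable (fun p : X × Y => c p.1 p.2) (γ.fst ⊗ₘ κ) := by
      rw [hdis]; exact integrable_of_cont γ hc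
    have hmeasg : StronglyMeasurable fun x => ∫ y, c x y ∂κ x :=
      hc.stronglyMeasurable.integral_kernel_prod_right' (κ := κ)
    have h2 : ∫ q, c q.1.1 q.2 ∂η = ∫ p, c p.1 p.2 ∂γ := by
      rw [hηdef, Measure.integral_compProd hint2]
      have hη2 : ∫ p : X × X, (∫ y, c p.1 y ∂(κ' p)) ∂π
          = ∫ p : X × X, (fun x => ∫ y, c x y ∂(κ x)) p.1 ∂π := by
        simp only [hκ'def, Kernel.comap_apply]
      rw [hη2]
      rw [← integral_map measurable_fst.aemeasurable
        (hmeasg.aestronglyMeasurable (μ := π.map Prod.fst))]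
      have hπfst : π.map Prod.fst = γ.fst := hπ
      rw [hπfst]
      conv_rhs => rw [← hdis]
      rw [Measure.integral_compProd hγint]
    calc ∫ p, c p.1 p.2 ∂(η.map g) = ∫ q, c q.1.2 q.2 ∂η := hmap
      _ ≤ ∫ q, (c q.1.1 q.2 + L * dist q.1.1 q.1.2) ∂η := hmono
      _ = ∫ q, c q.1.1 q.2 ∂η + ∫ q, L * dist q.1.1 q.1.2 ∂η := hadd
      _ = ∫ p, c p.1 p.2 ∂γ + L * ∫ p, dist p.1 p.2 ∂π := by rw [h2, h3]

/-- Gluing on the second variable, obtained from `step_fst` by swapping. -/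
lemma step_snd (c : X → Y → ℝ) (hc : Continuous fun p : X × Y => c p.1 p.2)
    (L : ℝ) (hlip : ∀ x y y', c x y ≤ c x y' + L * dist y y')
    (γ : Measure (X × Y)) [IsProbabilityMeasure γ]
    (π : Measure (Y × Y)) [IsProbabilityMeasure π] (hπ : π.fst = γ.snd) :
    ∃ γ' : Measure (X × Y), γ'.fst = γ.fst ∧ γ'.snd = π.snd ∧
      ∫ p, c p.1 p.2 ∂γ' ≤ ∫ p, c p.1 p.2 ∂γ + L * ∫ p, dist p.1 p.2 ∂π := by
  set γs : Measure (Y × X) := γ.map Prod.swap with hγsdef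
  have hswapmeas : Measurable (Prod.swap : X × Y → Y × X) := measurable_swap
  have hγsprob : IsProbabilityMeasure γs := Measure.isProbabilityMeasure_map hswapmeas.aemeasurable
  have hγsfst : γs.fst = γ.snd := by
    rw [Measure.fst, hγsdef, Measure.map_map measurable_fst hswapmeas]
    rfl
  have hγssnd : γs.snd = γ.fst := by
    rw [Measure.snd, hγsdef, Measure.map_map measurable_snd hswapmeas]
    rfl
  have hc' : Continuous fun p : Y × X => c p.2 p.1 :=
    hc.comp (continuous_snd.prodMk continuous_fst)
  obtain ⟨γ'', h1, h2, h3⟩ := step_fst (fun y x => c x y) hc' L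
    (fun y y' x => hlip x y y') γs π (hπ.trans hγsfst.symm)
  haveI : IsProbabilityMeasure γ'' := isProbabilityMeasure_of_fst h1
  refine ⟨γ''.map Prod.swap, ?_, ?_, ?_⟩
  · rw [Measure.fst, Measure.map_map measurable_fst measurable_swap]
    show γ''.map Prod.snd = γ.fst
    rw [← Measure.snd, h2, hγssnd]
  · rw [Measure.snd, Measure.map_map measurable_snd measurable_swap]
    show γ''.map Prod.fst = π.snd
    rw [← Measure.fst, h1]
  · have hmap1 : ∫ p, c p.1 p.2 ∂(γ''.map Prod.swap) = ∫ p : Y × X, c p.2 p.1 ∂γ'' := by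
      rw [integral_map measurable_swap.aemeasurable hc.aestronglyMeasurable]
      rfl
    have hmap2 : ∫ p : Y × X, c p.2 p.1 ∂γs = ∫ p, c p.1 p.2 ∂γ := by
      rw [hγsdef, integral_map measurable_swap.aemeasurable hc'.aestronglyMeasurable]
      rfl
    rw [hmap1, ← hmap2]
    exact h3

lemma W1_comm {α : Type*} [MetricSpace α] [CompactSpace α] [MeasurableSpace α] [BorelSpace α]
    (ν₀ ν₁ : Measure α) : W1 ν₀ ν₁ = W1 ν₁ ν₀ := by
  have key : ∀ (a b : Measure α) (r : ℝ),
      (∃ γ : Measure (α × α), IsCoupling γ a b ∧ r = ∫ p, dist p.1 p.2 ∂γ) →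
      (∃ γ : Measure (α × α), IsCoupling γ b a ∧ r = ∫ p, dist p.1 p.2 ∂γ) := by
    rintro a b r ⟨γ, ⟨hf, hs⟩, rfl⟩
    refine ⟨γ.map Prod.swap, ⟨?_, ?_⟩, ?_⟩
    · rw [Measure.fst, Measure.map_map measurable_fst measurable_swap]
      rw [← hs, Measure.snd]
      rfl
    · rw [Measure.snd, Measure.map_map measurable_snd measurable_swap]
      rw [← hf, Measure.fst]
      rfl
    · rw [integral_map measurable_swap.aemeasurable]
      · simp only [Prod.fst_swap, Prod.snd_swap]
        congr 1
        ext p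
        exact dist_comm p.1 p.2
      · exact (continuous_fst.dist continuous_snd).aestronglyMeasurable
  unfold W1
  congr 1
  ext r
  exact ⟨key ν₀ ν₁ r, key ν₁ ν₀ r⟩

end Aux

section Main

variable {M N : Type*} [MetricSpace M] [MetricSpace N] [CompactSpace M] [CompactSpace N]
    [MeasurableSpace M] [BorelSpace M] [MeasurableSpace N] [BorelSpace N]

lemma transportCost_le (c : M → N → ℝ) (L : ℝ) (hL : 0 ≤ L)
    (hlip : ∀ x x' : M, ∀ y y' : N, |c x y - c x' y'| ≤ L * (dist x x' + dist y y'))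
    (μ μ' : Measure M) (ν ν' : Measure N)
    [IsProbabilityMeasure μ] [IsProbabilityMeasure μ']
    [IsProbabilityMeasure ν] [IsProbabilityMeasure ν'] :
    transportCost c μ' ν' ≤ transportCost c μ ν + L * (W1 μ μ' + W1 ν ν') := by
  have hMne : Nonempty M := by
    rcases isEmpty_or_nonempty M with h | h
    · exact absurd (by rw [Set.univ_eq_empty_iff.mpr h, measure_empty] : μ Set.univ = 0)
        (by rw [measure_univ]; exact one_ne_zero)
    · exact h
  have hNne : Nonempty N := by
    rcases isEmpty_or_nonempty N with h | h
    · exact absurd (by rw [Set.univ_eq_empty_iff.mpr h, measure_empty] : ν Set.univ = 0)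
        (by rw [measure_univ]; exact one_ne_zero)
    · exact h
  -- continuity of c
  have hc : Continuous fun p : M × N => c p.1 p.2 := by
    have : LipschitzWith (Real.toNNReal (2 * L)) (fun p : M × N => c p.1 p.2) := by
      apply LipschitzWith.of_dist_le_mul
      intro p q
      rw [Real.dist_eq, Prod.dist_eq]
      calc |c p.1 p.2 - c q.1 q.2| ≤ L * (dist p.1 q.1 + dist p.2 q.2) := hlip _ _ _ _
        _ ≤ L * (max (dist p.1 q.1) (dist p.2 q.2) + max (dist p.1 q.1) (dist p.2 q.2)) := by
            apply mul_le_mul_of_nonneg_left _ hL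
            exact add_le_add (le_max_left _ _) (le_max_right _ _)
        _ = 2 * L * max (dist p.1 q.1) (dist p.2 q.2) := by ring
        _ = Real.toNNReal (2 * L) * max (dist p.1 q.1) (dist p.2 q.2) := by
            rw [Real.coe_toNNReal _ (by positivity)]
    exact this.continuous
  -- a uniform bound on |c|
  obtain ⟨C, hC⟩ := isBounded_iff_forall_norm_le.1 (isCompact_range hc).isBounded
  have hCbound : ∀ x y, |c x y| ≤ C := fun x y => hC _ ⟨(x, y), rfl⟩
  -- the sets
  set S : Set ℝ := {r | ∃ γ : Measure (M × N), IsCoupling γ μ ν ∧ r = ∫ p, c p.1 p.2 ∂γ} with hS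
  set S' : Set ℝ :=
    {r | ∃ γ : Measure (M × N), IsCoupling γ μ' ν' ∧ r = ∫ p, c p.1 p.2 ∂γ} with hS'
  set T1 : Set ℝ :=
    {r | ∃ γ : Measure (M × M), IsCoupling γ μ μ' ∧ r = ∫ p, dist p.1 p.2 ∂γ} with hT1
  set T2 : Set ℝ :=
    {r | ∃ γ : Measure (N × N), IsCoupling γ ν ν' ∧ r = ∫ p, dist p.1 p.2 ∂γ} with hT2
  have hSne : S.Nonempty := ⟨_, μ.prod ν, ⟨Measure.fst_prod, Measure.snd_prod⟩, rfl⟩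
  have hT1ne : T1.Nonempty := ⟨_, μ.prod μ', ⟨Measure.fst_prod, Measure.snd_prod⟩, rfl⟩
  have hT2ne : T2.Nonempty := ⟨_, ν.prod ν', ⟨Measure.fst_prod, Measure.snd_prod⟩, rfl⟩
  have hS'bdd : BddBelow S' := by
    refine ⟨-C, ?_⟩
    rintro r ⟨γ, ⟨hf, hs⟩, rfl⟩
    haveI : IsProbabilityMeasure γ := isProbabilityMeasure_of_fst (hf.trans rfl)
    have : (-C : ℝ) = ∫ _p : M × N, (-C : ℝ) ∂γ := by simp
    rw [this]
    refine integral_mono (integrable_const _) (integrable_of_cont γ hc) fun p => ?_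
    exact neg_le_of_abs_le (hCbound p.1 p.2)
  have hT1bdd : BddBelow T1 := by
    refine ⟨0, ?_⟩
    rintro r ⟨γ, _, rfl⟩
    exact integral_nonneg fun p => dist_nonneg
  have hT2bdd : BddBelow T2 := by
    refine ⟨0, ?_⟩
    rintro r ⟨γ, _, rfl⟩
    exact integral_nonneg fun p => dist_nonneg
  -- per-variable Lipschitz estimates
  have hlip1 : ∀ x x' : M, ∀ y : N, c x y ≤ c x' y + L * dist x x' := by
    intro x x' y
    have := hlip x x' y y
    rw [dist_self, add_zero] at this
    linarith [(abs_le.1 this).2]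
  have hlip2 : ∀ (x : M) (y y' : N), c x y ≤ c x y' + L * dist y y' := by
    intro x y y'
    have := hlip x x y y'
    rw [dist_self, zero_add] at this
    linarith [(abs_le.1 this).2]
  refine le_of_forall_pos_le_add fun ε hε => ?_
  set δ : ℝ := ε / (1 + 2 * L) with hδdef
  have h1p : (0:ℝ) < 1 + 2 * L := by linarith
  have hδ : 0 < δ := div_pos hε h1p
  obtain ⟨r, hrS, hrlt⟩ := Real.lt_sInf_add_pos hSne hδ
  obtain ⟨γ, ⟨hγf, hγs⟩, rfl⟩ := hrS
  obtain ⟨r1, hr1T, hr1lt⟩ := Real.lt_sInf_add_pos hT1ne hδ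
  obtain ⟨π₁, ⟨hπ₁f, hπ₁s⟩, rfl⟩ := hr1T
  obtain ⟨r2, hr2T, hr2lt⟩ := Real.lt_sInf_add_pos hT2ne hδ
  obtain ⟨π₂, ⟨hπ₂f, hπ₂s⟩, rfl⟩ := hr2T
  haveI : IsProbabilityMeasure γ := isProbabilityMeasure_of_fst hγf
  haveI : IsProbabilityMeasure π₁ := isProbabilityMeasure_of_fst hπ₁f
  haveI : IsProbabilityMeasure π₂ := isProbabilityMeasure_of_fst hπ₂f
  obtain ⟨γ₁, hγ₁f, hγ₁s, hγ₁cost⟩ :=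
    step_fst c hc L hlip1 γ π₁ (hπ₁f.trans hγf.symm)
  haveI : IsProbabilityMeasure γ₁ :=
    isProbabilityMeasure_of_fst (μ := μ') (by rw [hγ₁f, hπ₁s])
  obtain ⟨γ₂, hγ₂f, hγ₂s, hγ₂cost⟩ :=
    step_snd c hc L hlip2 γ₁ π₂ (by rw [hπ₂f, hγ₁s, hγs])
  have hmem : (∫ p, c p.1 p.2 ∂γ₂) ∈ S' := by
    refine ⟨γ₂, ⟨?_, ?_⟩, rfl⟩
    · rw [hγ₂f, hγ₁f, hπ₁s]
    · rw [hγ₂s, hπ₂s]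
  have hπ₂nonneg : 0 ≤ ∫ p, dist p.1 p.2 ∂π₂ := integral_nonneg fun p => dist_nonneg
  have hπ₁nonneg : 0 ≤ ∫ p, dist p.1 p.2 ∂π₁ := integral_nonneg fun p => dist_nonneg
  calc transportCost c μ' ν' ≤ ∫ p, c p.1 p.2 ∂γ₂ := csInf_le hS'bdd hmem
    _ ≤ ∫ p, c p.1 p.2 ∂γ₁ + L * ∫ p, dist p.1 p.2 ∂π₂ := hγ₂cost
    _ ≤ (∫ p, c p.1 p.2 ∂γ + L * ∫ p, dist p.1 p.2 ∂π₁) + L * ∫ p, dist p.1 p.2 ∂π₂ := by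
        linarith
    _ ≤ (transportCost c μ ν + δ) + L * (W1 μ μ' + δ) + L * (W1 ν ν' + δ) := by
        have e1 : ∫ p, c p.1 p.2 ∂γ < transportCost c μ ν + δ := hrlt
        have e2 : ∫ p, dist p.1 p.2 ∂π₁ < W1 μ μ' + δ := hr1lt
        have e3 : ∫ p, dist p.1 p.2 ∂π₂ < W1 ν ν' + δ := hr2lt
        nlinarith
    _ = transportCost c μ ν + L * (W1 μ μ' + W1 ν ν') + δ * (1 + 2 * L) := by ring
    _ = transportCost c μ ν + L * (W1 μ μ' + W1 ν ν') + ε := by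
        rw [hδdef, div_mul_cancel₀ _ (ne_of_gt h1p)]

end Main

/-- Lipschitz continuity of the total transport cost with respect to the two marginals,
for a Lipschitz cost function on a product of compact metric spaces. -/
theorem transportCost_lipschitz
    {M N : Type*} [MetricSpace M] [MetricSpace N] [CompactSpace M] [CompactSpace N]
    [MeasurableSpace M] [BorelSpace M] [MeasurableSpace N] [BorelSpace N]
    (c : M → N → ℝ) (L : ℝ) (hL : 0 ≤ L)
    (hlip : ∀ x x' : M, ∀ y y' : N, |c x y - c x' y'| ≤ L * (dist x x' + dist y y'))
    (μ μ' : Measure M) (ν ν' : Measure N)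
    [IsProbabilityMeasure μ] [IsProbabilityMeasure μ']
    [IsProbabilityMeasure ν] [IsProbabilityMeasure ν'] :
    |transportCost c μ ν - transportCost c μ' ν'| ≤ L * (W1 μ μ' + W1 ν ν') := by
  rw [abs_sub_le_iff]
  constructor
  · have := transportCost_le c L hL hlip μ' μ ν' ν
    rw [W1_comm μ' μ, W1_comm ν' ν] at this
    linarith
  · have := transportCost_le c L hL hlip μ μ' ν ν'
    linarith
end

section
/- Let c : M × N → ℝ be Lipschitz on M × N and let T : M → N be a map induced by a strongly c-concave potential ψ : N → ℝ with modulus ω(r) = C r² on M × N, C > 0. Then T is 1/2-Hölder: for all x, x' ∈ M, d_N(T(x), T(x')) ≤ (Lip(c) · d_M(x, x') / C)^{1/2}. -/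
/-- A map induced by a strongly c-concave potential with quadratic modulus, for a Lipschitz
cost, is 1/2-Hölder. -/
theorem holder_of_strong_cconcave
    {M N : Type*} [MetricSpace M] [MetricSpace N]
    (c : M → N → ℝ) (L : ℝ) (hL : 0 ≤ L)
    (hlip : ∀ x x' : M, ∀ y y' : N, |c x y - c x' y'| ≤ L * (dist x x' + dist y y'))
    (ψ : N → ℝ) (C : ℝ) (hC : 0 < C) (T : M → N)
    -- `T` is induced by `ψ`
    (hind : ∀ x : M, ∀ y : N, c x (T x) - ψ (T x) ≤ c x y - ψ y)
    -- `ψ` is strongly c-concave with modulus `ω r = C r²` on `M × N`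
    (hstrong : ∀ (x : M) (y z : N), x ∈ cSuperdiff c ψ y →
      ψ z - c x z ≤ ψ y - c x y - C * (dist y z) ^ 2) :
    ∀ x x' : M, dist (T x) (T x') ≤ Real.sqrt (L * dist x x' / C) := by
  intro x x'
  have hmem : ∀ a : M, a ∈ cSuperdiff c ψ (T a) := by
    intro a z
    have := hind a z
    linarith
  have h1 := hstrong x (T x) (T x') (hmem x)
  have h2 := hstrong x' (T x') (T x) (hmem x')
  have hd : dist (T x') (T x) = dist (T x) (T x') := dist_comm _ _
  rw [hd] at h2
  have key : 2 * (C * dist (T x) (T x') ^ 2) ≤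
      (c x (T x') - c x' (T x')) + (c x' (T x) - c x (T x)) := by linarith
  have hb1 : c x (T x') - c x' (T x') ≤ L * dist x x' := by
    have := hlip x x' (T x') (T x')
    have h0 : dist (T x') (T x') = 0 := dist_self _
    rw [h0] at this
    have := abs_le.mp this
    linarith [this.2]
  have hb2 : c x' (T x) - c x (T x) ≤ L * dist x x' := by
    have := hlip x' x (T x) (T x)
    have h0 : dist (T x) (T x) = 0 := dist_self _
    rw [h0, dist_comm x' x] at this
    have := abs_le.mp this
    linarith [this.2]
  have hsq : dist (T x) (T x') ^ 2 ≤ L * dist x x' / C := by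
    rw [le_div_iff₀ hC]
    nlinarith
  calc dist (T x) (T x') = Real.sqrt (dist (T x) (T x') ^ 2) := by
        rw [Real.sqrt_sq dist_nonneg]
    _ ≤ Real.sqrt (L * dist x x' / C) := Real.sqrt_le_sqrt hsq
end

section
/- Let M be a metric space with cost c(x,y) = h(d(x,y)) for h : ℝ≥0 → ℝ ∪ {+∞} continuous decreasing with h(0) = +∞, h(t) < ∞ for t > 0, and c bounded below by c_min. Let S ⊆ M × M be a c-cyclically monotone set containing two pairs (x₀, y₀) and (x₀', y₀') such that the pairwise distances between the four points x₀, y₀, x₀', y₀' are all at least ε > 0. Then for every (x, y) ∈ S, c(x, y) ≤ h(ε) + 2 h(ε/2) + 2|c_min|. -/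
lemma EReal_cancel {x : EReal} {r s : ℝ} (h : x + (r : EReal) ≤ (s : EReal)) :
    x ≤ ((s - r : ℝ) : EReal) := by
  rw [EReal.coe_sub]
  rw [EReal.le_sub_iff_add_le (Or.inl (EReal.coe_ne_bot r)) (Or.inl (EReal.coe_ne_top r))]
  exact h

lemma key (h : ℝ → EReal) (hmono : Antitone h)
    (hfin : ∀ t : ℝ, 0 < t → h t < ⊤)
    (cmin : ℝ) (hbdd : ∀ t : ℝ, (cmin : EReal) ≤ h t)
    (ε : ℝ) (hε : 0 < ε) (c : EReal) (da db d2 d3 dc : ℝ)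
    (hda : ε / 2 ≤ da) (hdb : ε / 2 ≤ db) (hdc : ε ≤ dc)
    (hd2 : ε ≤ d2) (hd3 : ε ≤ d3)
    (hc : c + h d2 + h d3 ≤ h da + h db + h dc) :
    c ≤ h ε + 2 * h (ε / 2) + ((2 * |cmin| : ℝ) : EReal) := by
  have hε2 : (0:ℝ) < ε / 2 := by linarith
  have hreal : ∀ t : ℝ, 0 < t → h t = ((h t).toReal : EReal) := fun t ht => by
    rw [EReal.coe_toReal (hfin t ht).ne (lt_of_lt_of_le (EReal.bot_lt_coe cmin) (hbdd t)).ne']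
  have hle : ∀ t : ℝ, 0 < t → cmin ≤ (h t).toReal := fun t ht => by
    have := hbdd t
    rw [hreal t ht] at this
    exact_mod_cast this
  set B := (h ε).toReal
  set C := (h (ε/2)).toReal
  set a2 := (h d2).toReal
  set a3 := (h d3).toReal
  have hBε : h ε = (B : EReal) := hreal ε hε
  have hC : h (ε/2) = (C : EReal) := hreal _ hε2
  have h2 : h d2 = (a2 : EReal) := hreal _ (lt_of_lt_of_le hε hd2)
  have h3 : h d3 = (a3 : EReal) := hreal _ (lt_of_lt_of_le hε hd3)
  have hba : h da ≤ (C : EReal) := hC ▸ hmono hda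
  have hbb : h db ≤ (C : EReal) := hC ▸ hmono hdb
  have hbc : h dc ≤ (B : EReal) := hBε ▸ hmono hdc
  have hrhs : h da + h db + h dc ≤ ((C + C + B : ℝ) : EReal) := by
    push_cast
    exact add_le_add (add_le_add hba hbb) hbc
  rw [h2, h3, add_assoc, ← EReal.coe_add] at hc
  have hc' : c ≤ ((C + C + B - (a2 + a3) : ℝ) : EReal) :=
    EReal_cancel (le_trans hc hrhs)
  rw [hBε, hC]
  calc c ≤ ((C + C + B - (a2 + a3) : ℝ) : EReal) := hc'
    _ ≤ ((B + 2 * C + 2 * |cmin| : ℝ) : EReal) := by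
        apply EReal.coe_le_coe_iff.2
        have ha2 := hle d2 (lt_of_lt_of_le hε hd2)
        have ha3 := hle d3 (lt_of_lt_of_le hε hd3)
        have := neg_abs_le cmin
        linarith
    _ = (B : EReal) + 2 * (C : EReal) + ((2 * |cmin| : ℝ) : EReal) := by
        norm_cast



/-- c-cyclical monotonicity for an extended-real-valued cost. -/
def CCyclicallyMonotone {M : Type*} (c : M → M → EReal) (S : Set (M × M)) : Prop :=
  ∀ (k : ℕ) (p : Fin k → M × M), (∀ i, p i ∈ S) → ∀ σ : Equiv.Perm (Fin k),
    (∑ i, c (p i).1 (p i).2) ≤ ∑ i, c (p i).1 (p (σ i)).2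

/-- On a c-cyclically monotone set containing two pairs whose four points are pairwise at
distance at least `ε`, the cost `c(x,y) = h(d(x,y))` is bounded by
`h(ε) + 2 h(ε/2) + 2 |c_min|`. -/
theorem cost_bound_on_ccyclically_monotone
    {M : Type*} [MetricSpace M]
    (h : ℝ → EReal) (hcont : Continuous h) (hmono : Antitone h)
    (h0 : h 0 = ⊤) (hfin : ∀ t : ℝ, 0 < t → h t < ⊤)
    (cmin : ℝ) (hbdd : ∀ t : ℝ, (cmin : EReal) ≤ h t)
    (S : Set (M × M)) (hS : CCyclicallyMonotone (fun x y => h (dist x y)) S)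
    (ε : ℝ) (hε : 0 < ε)
    (x₀ y₀ x₀' y₀' : M)
    (hp₁ : (x₀, y₀) ∈ S) (hp₂ : (x₀', y₀') ∈ S)
    (hd₁ : ε ≤ dist x₀ y₀) (hd₂ : ε ≤ dist x₀ x₀') (hd₃ : ε ≤ dist x₀ y₀')
    (hd₄ : ε ≤ dist y₀ x₀') (hd₅ : ε ≤ dist y₀ y₀') (hd₆ : ε ≤ dist x₀' y₀') :
    ∀ p ∈ S, h (dist p.1 p.2) ≤ h ε + 2 * h (ε / 2) + ((2 * |cmin| : ℝ) : EReal) := by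
  rintro ⟨x, y⟩ hxy
  have hmem : ∀ i, (![(x, y), (x₀, y₀), (x₀', y₀')] : Fin 3 → M × M) i ∈ S := by
    intro i; fin_cases i <;> simpa
  -- choose b ∈ {y₀, y₀'} far from x
  have hx : ε / 2 ≤ dist x y₀ ∨ ε / 2 ≤ dist x y₀' := by
    by_contra hcon
    push_neg at hcon
    have htri := dist_triangle y₀ x y₀'
    rw [dist_comm y₀ x] at htri
    linarith
  have hy : ε / 2 ≤ dist x₀ y ∨ ε / 2 ≤ dist x₀' y := by
    by_contra hcon
    push_neg at hcon
    have htri := dist_triangle x₀ y x₀'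
    rw [dist_comm y x₀'] at htri
    linarith
  rcases hx with hx | hx <;> rcases hy with hy | hy
  · -- match x ↦ y₀, x₀ ↦ y : swap 0 1
    have H := hS 3 _ hmem (Equiv.swap 0 1)
    simp only [Fin.sum_univ_three, Matrix.cons_val_zero, Matrix.cons_val_one, Matrix.head_cons,
      Matrix.cons_val_two, Matrix.tail_cons, Equiv.swap_apply_left, Equiv.swap_apply_right,
      Equiv.swap_apply_of_ne_of_ne (by decide : (2 : Fin 3) ≠ 0) (by decide : (2 : Fin 3) ≠ 1)] at H
    exact key h hmono hfin cmin hbdd ε hε _ _ _ _ _ _ hx hy hd₆ hd₁ hd₆ H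
  · -- x ↦ y₀, x₀' ↦ y, x₀ ↦ y₀' : σ = swap 0 2 * swap 0 1
    have H := hS 3 _ hmem (Equiv.swap 0 2 * Equiv.swap 0 1)
    simp only [Fin.sum_univ_three, Matrix.cons_val_zero, Matrix.cons_val_one, Matrix.head_cons,
      Matrix.cons_val_two, Matrix.tail_cons, Equiv.Perm.mul_apply, Equiv.swap_apply_def] at H
    simp only [Fin.reduceEq, reduceIte, Matrix.cons_val_zero, Matrix.cons_val_one, Matrix.head_cons, Matrix.cons_val_two, Matrix.tail_cons] at H
    refine key h hmono hfin cmin hbdd ε hε _ (dist x y₀) (dist x₀' y) _ _ (dist x₀ y₀') hx hy hd₃ hd₁ hd₆ ?_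
    calc _ ≤ _ := H
      _ = h (dist x y₀) + h (dist x₀' y) + h (dist x₀ y₀') := by abel
  · -- x ↦ y₀', x₀ ↦ y, x₀' ↦ y₀ : σ = swap 0 1 * swap 0 2
    have H := hS 3 _ hmem (Equiv.swap 0 1 * Equiv.swap 0 2)
    simp only [Fin.sum_univ_three, Matrix.cons_val_zero, Matrix.cons_val_one, Matrix.head_cons,
      Matrix.cons_val_two, Matrix.tail_cons, Equiv.Perm.mul_apply, Equiv.swap_apply_def] at H
    simp only [Fin.reduceEq, reduceIte, Matrix.cons_val_zero, Matrix.cons_val_one, Matrix.head_cons, Matrix.cons_val_two, Matrix.tail_cons] at H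
    refine key h hmono hfin cmin hbdd ε hε _ (dist x y₀') (dist x₀ y) _ _ (dist x₀' y₀) hx hy ?_ hd₁ hd₆ ?_
    · rwa [dist_comm]
    · calc _ ≤ _ := H
        _ = h (dist x y₀') + h (dist x₀ y) + h (dist x₀' y₀) := by abel
  · -- x ↦ y₀', x₀' ↦ y : swap 0 2
    have H := hS 3 _ hmem (Equiv.swap 0 2)
    simp only [Fin.sum_univ_three, Matrix.cons_val_zero, Matrix.cons_val_one, Matrix.head_cons,
      Matrix.cons_val_two, Matrix.tail_cons, Equiv.swap_apply_def] at H
    simp only [Fin.reduceEq, reduceIte, Matrix.cons_val_zero, Matrix.cons_val_one, Matrix.head_cons, Matrix.cons_val_two, Matrix.tail_cons] at H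
    refine key h hmono hfin cmin hbdd ε hε _ (dist x y₀') (dist x₀' y) _ _ (dist x₀ y₀) hx hy hd₁ hd₁ hd₆ ?_
    calc _ ≤ _ := H
      _ = h (dist x y₀') + h (dist x₀' y) + h (dist x₀ y₀) := by abel
end

section
/- For the reflector cost c(x,y) = −ln(1 − ⟨x,y⟩) on the sphere S^{d-1}, for every 0 < ε < 2 the set D_ε = {(x,y) ∈ S^{d-1} × S^{d-1} : d(x,y) ≥ ε} (d the geodesic distance) is c-convex with respect to the base point: if (x, y₀), (x, y₁) ∈ D_ε and y_t = c-exp_x((1−t)p₀ + t p₁) with p_i = −∇_x c(x, y_i), then (x, y_t) ∈ D_ε for all t ∈ [0,1]. -/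
open scoped RealInnerProductSpace

/-- The c-exponential map for the reflector cost `c(x,y) = -ln(1 - ⟨x,y⟩)` on the sphere. -/
noncomputable def cexpRefl {d : ℕ} (x p : EuclideanSpace ℝ (Fin d)) :
    EuclideanSpace ℝ (Fin d) :=
  (1 - 2 / (1 + ‖p‖ ^ 2)) • x - (2 / (1 + ‖p‖ ^ 2)) • p

private lemma convex_sq_bound (a b t M : ℝ) (ht0 : 0 ≤ t) (ht1 : t ≤ 1)
    (hA : a ^ 2 ≤ M) (hB : b ^ 2 ≤ M) : ((1 - t) * a + t * b) ^ 2 ≤ M := by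
  nlinarith [mul_nonneg (mul_nonneg ht0 (sub_nonneg.2 ht1)) (sq_nonneg (a - b)),
    mul_nonneg ht0 (sub_nonneg.2 hB), mul_nonneg (sub_nonneg.2 ht1) (sub_nonneg.2 hA)]

private lemma final_ineq (K s M : ℝ) (h1K : 0 < 1 - K) (hs : s ≤ M)
    (hM : M * (1 - K) = 1 + K) : (1 - K) * (1 + s) ≤ 2 := by
  nlinarith [mul_le_mul_of_nonneg_left hs h1K.le]

private lemma arccos_antitone : Antitone Real.arccos := fun a b h => by
  unfold Real.arccos
  exact sub_le_sub_left (Real.monotone_arcsin h) _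

/-- For the reflector cost on the sphere, the set
`D_ε = {(x,y) : d(x,y) ≥ ε}` (geodesic distance `d(x,y) = arccos⟨x,y⟩`) is c-convex with
respect to the base point `x`: c-segments with base `x` joining two points of `D_ε` stay in
`D_ε`. -/
theorem reflector_Deps_cconvex {d : ℕ} (ε : ℝ) (hε0 : 0 < ε) (hε2 : ε < 2)
    (x y₀ y₁ : EuclideanSpace ℝ (Fin d))
    (hx : ‖x‖ = 1) (hy₀ : ‖y₀‖ = 1) (hy₁ : ‖y₁‖ = 1)
    (hd₀ : ε ≤ Real.arccos ⟪x, y₀⟫) (hd₁ : ε ≤ Real.arccos ⟪x, y₁⟫)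
    (p₀ p₁ : EuclideanSpace ℝ (Fin d))
    -- `p_i = -∇_x c(x, y_i)`
    (hp₀ : p₀ = (1 - ⟪x, y₀⟫)⁻¹ • (⟪x, y₀⟫ • x - y₀))
    (hp₁ : p₁ = (1 - ⟪x, y₁⟫)⁻¹ • (⟪x, y₁⟫ • x - y₁)) :
    ∀ t ∈ Set.Icc (0:ℝ) 1, ε ≤ Real.arccos ⟪x, cexpRefl x ((1 - t) • p₀ + t • p₁)⟫ := by
  intro t ht
  obtain ⟨ht0, ht1⟩ := ht
  set c₀ := ⟪x, y₀⟫ with hc₀def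
  set c₁ := ⟪x, y₁⟫ with hc₁def
  have hεπ : ε ≤ Real.pi := le_trans hε2.le (by linarith [Real.pi_gt_three])
  set K := Real.cos ε with hKdef
  have hK1 : K < 1 := by
    have := Real.cos_lt_cos_of_nonneg_of_le_pi le_rfl hεπ hε0
    simpa using this
  have habs₀ : |c₀| ≤ 1 := by simpa [hx, hy₀] using abs_real_inner_le_norm x y₀
  have habs₁ : |c₁| ≤ 1 := by simpa [hx, hy₁] using abs_real_inner_le_norm x y₁
  have hxx : ⟪x, x⟫ = 1 := by
    rw [real_inner_self_eq_norm_sq, hx]; norm_num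
  -- c_i ≤ cos ε
  have key : ∀ c : ℝ, |c| ≤ 1 → ε ≤ Real.arccos c → c ≤ K := by
    intro c hc hd
    have h1 : Real.cos (Real.arccos c) ≤ Real.cos ε :=
      Real.cos_le_cos_of_nonneg_of_le_pi hε0.le (Real.arccos_le_pi c) hd
    rwa [Real.cos_arccos (neg_le_of_abs_le hc) (le_of_abs_le hc)] at h1
  have hcK₀ : c₀ ≤ K := key c₀ habs₀ hd₀
  have hcK₁ : c₁ ≤ K := key c₁ habs₁ hd₁
  have h1c₀ : (0:ℝ) < 1 - c₀ := by linarith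
  have h1c₁ : (0:ℝ) < 1 - c₁ := by linarith
  have h1K : (0:ℝ) < 1 - K := by linarith
  -- ⟪x, p_i⟫ = 0
  have hxp : ∀ (c : ℝ) (y : EuclideanSpace ℝ (Fin d)), ⟪x, y⟫ = c →
      ⟪x, (1 - c)⁻¹ • (c • x - y)⟫ = 0 := by
    intro c y hcy
    rw [real_inner_smul_right, inner_sub_right, real_inner_smul_right, hxx, hcy]
    ring
  have hxp₀ : ⟪x, p₀⟫ = 0 := by rw [hp₀]; exact hxp c₀ y₀ rfl
  have hxp₁ : ⟪x, p₁⟫ = 0 := by rw [hp₁]; exact hxp c₁ y₁ rfl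
  -- ‖p_i‖² = (1+c_i)/(1-c_i)
  have hnp : ∀ (c : ℝ) (y : EuclideanSpace ℝ (Fin d)), ⟪x, y⟫ = c → ‖y‖ = 1 → 1 - c ≠ 0 →
      ‖(1 - c)⁻¹ • (c • x - y)‖ ^ 2 = (1 + c) / (1 - c) := by
    intro c y hcy hny hc
    have h1 : ‖c • x - y‖ ^ 2 = 1 - c ^ 2 := by
      rw [norm_sub_sq_real, real_inner_smul_left, norm_smul, hcy, hx, hny,
        Real.norm_eq_abs, mul_pow, sq_abs]
      ring
    rw [norm_smul, mul_pow, h1, Real.norm_eq_abs, sq_abs]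
    field_simp
    ring
  have hnp₀ : ‖p₀‖ ^ 2 = (1 + c₀) / (1 - c₀) := by
    rw [hp₀]; exact hnp c₀ y₀ rfl hy₀ h1c₀.ne'
  have hnp₁ : ‖p₁‖ ^ 2 = (1 + c₁) / (1 - c₁) := by
    rw [hp₁]; exact hnp c₁ y₁ rfl hy₁ h1c₁.ne'
  set M := (1 + K) / (1 - K) with hMdef
  have hM : M * (1 - K) = 1 + K := by
    rw [hMdef, div_mul_cancel₀ _ h1K.ne']
  have hbound : ∀ c : ℝ, |c| ≤ 1 → c ≤ K → (1 + c) / (1 - c) ≤ M := by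
    intro c hc hcK
    have h1c : (0:ℝ) < 1 - c := by linarith
    rw [hMdef, div_le_div_iff₀ h1c h1K]
    nlinarith
  have hM₀ : ‖p₀‖ ^ 2 ≤ M := hnp₀ ▸ hbound c₀ habs₀ hcK₀
  have hM₁ : ‖p₁‖ ^ 2 ≤ M := hnp₁ ▸ hbound c₁ habs₁ hcK₁
  set q := (1 - t) • p₀ + t • p₁ with hqdef
  have hxq : ⟪x, q⟫ = 0 := by
    rw [hqdef, inner_add_right, real_inner_smul_right, real_inner_smul_right, hxp₀, hxp₁]
    ring
  have hqle : ‖q‖ ≤ (1 - t) * ‖p₀‖ + t * ‖p₁‖ := by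
    calc ‖q‖ ≤ ‖(1 - t) • p₀‖ + ‖t • p₁‖ := norm_add_le _ _
      _ = (1 - t) * ‖p₀‖ + t * ‖p₁‖ := by
          rw [norm_smul, norm_smul, Real.norm_eq_abs, Real.norm_eq_abs,
            abs_of_nonneg (by linarith), abs_of_nonneg ht0]
  have hqM : ‖q‖ ^ 2 ≤ M :=
    le_trans (pow_le_pow_left₀ (norm_nonneg q) hqle 2)
      (convex_sq_bound _ _ _ _ ht0 ht1 hM₀ hM₁)
  set s := ‖q‖ ^ 2 with hsdef
  have hs0 : (0:ℝ) ≤ s := sq_nonneg _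
  have hval : ⟪x, cexpRefl x q⟫ = 1 - 2 / (1 + s) := by
    rw [cexpRefl, inner_sub_right, real_inner_smul_right, real_inner_smul_right, hxx, hxq]
    ring
  rw [hval]
  have h1s : (0:ℝ) < 1 + s := by linarith
  have hvle : 1 - 2 / (1 + s) ≤ K := by
    rw [sub_le_iff_le_add, ← sub_le_iff_le_add', le_div_iff₀ h1s]
    exact final_ineq K s M h1K hqM hM
  calc ε = Real.arccos K := (Real.arccos_cos hε0.le hεπ).symm
    _ ≤ Real.arccos (1 - 2 / (1 + s)) := arccos_antitone hvle
end

section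
/- For the cost c(x,n) = −ln(max(0, ⟨x,n⟩)) on the sphere S^{d-1} (the Gauss curvature prescription cost), for every ε ∈ (0, π/2) the set D_ε = {(x,n) : d(x,n) ≤ π/2 − ε} (geodesic distance) is c-convex: if (x,y₀), (x,y₁) ∈ D_ε and y_t = c-exp_x((1−t)p₀ + t p₁) with p_i = −∇_x c(x,y_i), then (x, y_t) ∈ D_ε for all t ∈ [0,1]. -/
open scoped RealInnerProductSpace

/-- The c-exponential map for the Gauss curvature prescription cost
`c(x,n) = -ln(max(0,⟨x,n⟩))` on the sphere. -/
noncomputable def cexpGauss {d : ℕ} (x p : EuclideanSpace ℝ (Fin d)) :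
    EuclideanSpace ℝ (Fin d) :=
  (Real.sqrt (1 + ‖p‖ ^ 2))⁻¹ • (p + x)

/-!
Write `p_y = ⟪x, y⟫⁻¹ • y - x` for unit vectors `x, y` with `⟪x, y⟫ > 0`. Then `p_y ⟂ x`,
`cexpGauss x p_y = y`, and for every `p ⟂ x` the geodesic distance from `x` to `cexpGauss x p`
is `arctan ‖p‖`. Hence `d(x, y) = arctan ‖p_y‖` and `D_ε` is, in the coordinate `p`, the
intersection of `x^⟂` with the ball of radius `tan (π/2 - ε)`, which is convex.
-/

theorem norm_smul_add_smul_le_max {E : Type*} [SeminormedAddCommGroup E] [NormedSpace ℝ E]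
    {a b : E} {s t : ℝ} (hs : 0 ≤ s) (ht : 0 ≤ t) (hst : s + t = 1) :
    ‖s • a + t • b‖ ≤ max ‖a‖ ‖b‖ := by
  have hmem := convex_closedBall (0 : E) (max ‖a‖ ‖b‖)
    (mem_closedBall_zero_iff.2 (le_max_left ‖a‖ ‖b‖))
    (mem_closedBall_zero_iff.2 (le_max_right ‖a‖ ‖b‖)) hs ht hst
  exact mem_closedBall_zero_iff.1 hmem

section InnerProductSpace

variable {E : Type*} [NormedAddCommGroup E] [InnerProductSpace ℝ E] {x y p : E}

theorem inner_inv_inner_smul_sub_self (hx : ‖x‖ = 1) (hxy : ⟪x, y⟫ ≠ 0) :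
    ⟪x, ⟪x, y⟫⁻¹ • y - x⟫ = 0 := by
  rw [inner_sub_right, real_inner_smul_right, inv_mul_cancel₀ hxy, real_inner_self_eq_norm_sq,
    hx, one_pow, sub_self]

theorem sqrt_one_add_norm_sq_eq_norm_add (hx : ‖x‖ = 1) (hp : ⟪x, p⟫ = 0) :
    √(1 + ‖p‖ ^ 2) = ‖p + x‖ := by
  have hpx : ⟪p, x⟫ = 0 := by rwa [real_inner_comm]
  rw [← Real.sqrt_sq (norm_nonneg (p + x)), sq ‖p + x‖,
    norm_add_sq_eq_norm_sq_add_norm_sq_real hpx, hx, sq, mul_one, add_comm]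

end InnerProductSpace

section cexpGauss

variable {d : ℕ} {x y p : EuclideanSpace ℝ (Fin d)}

theorem inner_cexpGauss (hx : ‖x‖ = 1) (hp : ⟪x, p⟫ = 0) :
    ⟪x, cexpGauss x p⟫ = (√(1 + ‖p‖ ^ 2))⁻¹ := by
  rw [cexpGauss, real_inner_smul_right, inner_add_right, hp, real_inner_self_eq_norm_sq, hx]
  ring

theorem arccos_inner_cexpGauss (hx : ‖x‖ = 1) (hp : ⟪x, p⟫ = 0) :
    Real.arccos ⟪x, cexpGauss x p⟫ = Real.arctan ‖p‖ := by
  rw [inner_cexpGauss hx hp, Real.arctan_eq_arccos (norm_nonneg p)]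

theorem cexpGauss_inv_inner_smul_sub_self (hx : ‖x‖ = 1) (hy : ‖y‖ = 1) (hxy : 0 < ⟪x, y⟫) :
    cexpGauss x (⟪x, y⟫⁻¹ • y - x) = y := by
  rw [cexpGauss, sqrt_one_add_norm_sq_eq_norm_add hx (inner_inv_inner_smul_sub_self hx hxy.ne'),
    sub_add_cancel, norm_smul, hy, mul_one, Real.norm_eq_abs, abs_of_pos (inv_pos.2 hxy),
    inv_inv, smul_smul, mul_inv_cancel₀ hxy.ne', one_smul]

theorem arccos_inner_eq_arctan_norm (hx : ‖x‖ = 1) (hy : ‖y‖ = 1) (hxy : 0 < ⟪x, y⟫) :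
    Real.arccos ⟪x, y⟫ = Real.arctan ‖⟪x, y⟫⁻¹ • y - x‖ := by
  conv_lhs => rw [← cexpGauss_inv_inner_smul_sub_self hx hy hxy]
  exact arccos_inner_cexpGauss hx (inner_inv_inner_smul_sub_self hx hxy.ne')

end cexpGauss

theorem gauss_Deps_cconvex_general {d : ℕ} (ε : ℝ) (hε0 : 0 < ε)
    (x y₀ y₁ : EuclideanSpace ℝ (Fin d))
    (hx : ‖x‖ = 1) (hy₀ : ‖y₀‖ = 1) (hy₁ : ‖y₁‖ = 1)
    (hd₀ : Real.arccos ⟪x, y₀⟫ ≤ Real.pi / 2 - ε)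
    (hd₁ : Real.arccos ⟪x, y₁⟫ ≤ Real.pi / 2 - ε)
    (p₀ p₁ : EuclideanSpace ℝ (Fin d))
    -- `p_i = -∇_x c(x, y_i) = y_i/⟨x,y_i⟩ - x`
    (hp₀ : p₀ = ⟪x, y₀⟫⁻¹ • y₀ - x)
    (hp₁ : p₁ = ⟪x, y₁⟫⁻¹ • y₁ - x) :
    ∀ t ∈ Set.Icc (0:ℝ) 1,
      Real.arccos ⟪x, cexpGauss x ((1 - t) • p₀ + t • p₁)⟫ ≤ Real.pi / 2 - ε := by
  rintro t ⟨ht0, ht1⟩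
  have hc₀ : 0 < ⟪x, y₀⟫ := Real.arccos_lt_pi_div_two.1 (by linarith)
  have hc₁ : 0 < ⟪x, y₁⟫ := Real.arccos_lt_pi_div_two.1 (by linarith)
  have ho₀ : ⟪x, p₀⟫ = 0 := hp₀ ▸ inner_inv_inner_smul_sub_self hx hc₀.ne'
  have ho₁ : ⟪x, p₁⟫ = 0 := hp₁ ▸ inner_inv_inner_smul_sub_self hx hc₁.ne'
  have ho : ⟪x, (1 - t) • p₀ + t • p₁⟫ = 0 := by
    rw [inner_add_right, real_inner_smul_right, real_inner_smul_right, ho₀, ho₁]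
    ring
  rw [arccos_inner_cexpGauss hx ho]
  calc Real.arctan ‖(1 - t) • p₀ + t • p₁‖
      ≤ Real.arctan (max ‖p₀‖ ‖p₁‖) :=
        Real.arctan_mono (norm_smul_add_smul_le_max (by linarith) ht0 (by ring))
    _ = max (Real.arctan ‖p₀‖) (Real.arctan ‖p₁‖) := Real.arctan_mono.map_max
    _ ≤ Real.pi / 2 - ε := by
        rw [hp₀, hp₁, ← arccos_inner_eq_arctan_norm hx hy₀ hc₀,
          ← arccos_inner_eq_arctan_norm hx hy₁ hc₁]
        exact max_le hd₀ hd₁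

/-- For the Gauss curvature prescription cost on the sphere, the set
`D_ε = {(x,n) : d(x,n) ≤ π/2 - ε}` (geodesic distance `d(x,n) = arccos⟨x,n⟩`) is c-convex
with respect to the base point `x`. -/
theorem gauss_Deps_cconvex {d : ℕ} (ε : ℝ) (hε0 : 0 < ε) (hεπ : ε < Real.pi / 2)
    (x y₀ y₁ : EuclideanSpace ℝ (Fin d))
    (hx : ‖x‖ = 1) (hy₀ : ‖y₀‖ = 1) (hy₁ : ‖y₁‖ = 1)
    (hd₀ : Real.arccos ⟪x, y₀⟫ ≤ Real.pi / 2 - ε)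
    (hd₁ : Real.arccos ⟪x, y₁⟫ ≤ Real.pi / 2 - ε)
    (p₀ p₁ : EuclideanSpace ℝ (Fin d))
    -- `p_i = -∇_x c(x, y_i) = y_i/⟨x,y_i⟩ - x`
    (hp₀ : p₀ = ⟪x, y₀⟫⁻¹ • y₀ - x)
    (hp₁ : p₁ = ⟪x, y₁⟫⁻¹ • y₁ - x) :
    ∀ t ∈ Set.Icc (0:ℝ) 1,
      Real.arccos ⟪x, cexpGauss x ((1 - t) • p₀ + t • p₁)⟫ ≤ Real.pi / 2 - ε :=
  gauss_Deps_cconvex_general ε hε0 x y₀ y₁ hx hy₀ hy₁ hd₀ hd₁ p₀ p₁ hp₀ hp₁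
end

section
/- Let M, N be compact metric spaces, c : M × N → ℝ Lipschitz. Let μ, μ̃ ∈ P(M), ν, ν̃ ∈ P(N). Let T : M → N be an optimal transport map between μ and ν induced by a strongly c-concave potential ψ : N → ℝ with modulus ω(r) = Cr² on M × N, and let γ̃ be any optimal transport plan between μ̃ and ν̃ for the cost c. Then, setting ε = W₁(μ̃, μ) + W₁(ν, ν̃) and γ_T = (Id, T)_# μ, one has W₁(γ_T, γ̃) ≤ ε + √(2 Lip(c) ε / C), where W₁ on P(M × N) is with respect to the product distance d_M(x,x') + d_N(y,y'). -/
open MeasureTheory ProbabilityTheory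

/-- 1-Wasserstein distance on `P(M × N)` for the additive product distance
`d((x,y),(x',y')) = d_M(x,x') + d_N(y,y')`. -/
noncomputable def W1prod {M N : Type*} [MeasurableSpace M] [MeasurableSpace N]
    [PseudoMetricSpace M] [PseudoMetricSpace N]
    (γ₀ γ₁ : Measure (M × N)) : ℝ :=
  sInf {r | ∃ π : Measure ((M × N) × (M × N)), IsCoupling π γ₀ γ₁ ∧
    r = ∫ q, (dist q.1.1 q.2.1 + dist q.1.2 q.2.2) ∂π}

section Aux

variable {α β α' β' : Type*} [MeasurableSpace α] [MeasurableSpace β]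
  [MeasurableSpace α'] [MeasurableSpace β']

lemma aux_integrable_of_bound {μ : Measure α} [IsFiniteMeasure μ] {f : α → ℝ}
    (hf : AEStronglyMeasurable f μ) (K : ℝ) (h : ∀ a, |f a| ≤ K) : Integrable f μ :=
  Integrable.mono' (integrable_const K) hf
    (Filter.Eventually.of_forall (by simpa [Real.norm_eq_abs] using h))

lemma glue_fst (ρ : Measure (α × β)) [IsFiniteMeasure ρ]
    (κ : Kernel α α') [IsMarkovKernel κ] (η : Kernel β β') [IsMarkovKernel η] :
    (ρ ⊗ₘ ((κ.comap Prod.fst measurable_fst) ×ₖ (η.comap Prod.snd measurable_snd))).map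
      (fun p => (p.1.1, p.2.1)) = ρ.fst ⊗ₘ κ := by
  have hmg : Measurable fun p : (α × β) × α' × β' => (p.1.1, p.2.1) := by fun_prop
  ext s hs
  rw [Measure.map_apply hmg hs, Measure.compProd_apply (hmg hs), Measure.compProd_apply hs,
    Measure.fst, lintegral_map (Kernel.measurable_kernel_prodMk_left hs) measurable_fst]
  refine lintegral_congr fun q => ?_
  rw [Kernel.prod_apply, Kernel.comap_apply, Kernel.comap_apply]
  have hset : (Prod.mk q ⁻¹' ((fun p : (α × β) × α' × β' => (p.1.1, p.2.1)) ⁻¹' s))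
      = Prod.fst ⁻¹' (Prod.mk q.1 ⁻¹' s) := rfl
  rw [hset, ← Measure.fst_apply (measurable_prodMk_left hs), Measure.fst_prod]

lemma glue_snd (ρ : Measure (α × β)) [IsFiniteMeasure ρ]
    (κ : Kernel α α') [IsMarkovKernel κ] (η : Kernel β β') [IsMarkovKernel η] :
    (ρ ⊗ₘ ((κ.comap Prod.fst measurable_fst) ×ₖ (η.comap Prod.snd measurable_snd))).map
      (fun p => (p.1.2, p.2.2)) = ρ.snd ⊗ₘ η := by
  have hmg : Measurable fun p : (α × β) × α' × β' => (p.1.2, p.2.2) := by fun_prop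
  ext s hs
  rw [Measure.map_apply hmg hs, Measure.compProd_apply (hmg hs), Measure.compProd_apply hs,
    Measure.snd, lintegral_map (Kernel.measurable_kernel_prodMk_left hs) measurable_snd]
  refine lintegral_congr fun q => ?_
  rw [Kernel.prod_apply, Kernel.comap_apply, Kernel.comap_apply]
  have hset : (Prod.mk q ⁻¹' ((fun p : (α × β) × α' × β' => (p.1.2, p.2.2)) ⁻¹' s))
      = Prod.snd ⁻¹' (Prod.mk q.2 ⁻¹' s) := rfl
  rw [hset, ← Measure.snd_apply (measurable_prodMk_left hs), Measure.snd_prod]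

end Aux
set_option maxHeartbeats 2000000 in
/-- Stability of optimal transport plans with respect to both measures, for a Lipschitz cost
and an optimal map induced by a strongly c-concave potential with quadratic modulus. -/
theorem stability_both_measures
    {M N : Type*} [MetricSpace M] [MetricSpace N] [CompactSpace M] [CompactSpace N]
    [MeasurableSpace M] [BorelSpace M] [MeasurableSpace N] [BorelSpace N]
    (μ μ' : Measure M) (ν ν' : Measure N)
    [IsProbabilityMeasure μ] [IsProbabilityMeasure μ']
    [IsProbabilityMeasure ν] [IsProbabilityMeasure ν']
    (c : M → N → ℝ) (L : ℝ) (hL : 0 ≤ L)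
    (hlip : ∀ x x' : M, ∀ y y' : N, |c x y - c x' y'| ≤ L * (dist x x' + dist y y'))
    (T : M → N) (hTm : Measurable T) (hpush : Measure.map T μ = ν)
    (ψ : N → ℝ) (C : ℝ) (hC : 0 < C)
    -- `T` is induced by `ψ`
    (hind : ∀ x : M, ∀ y : N, c x (T x) - ψ (T x) ≤ c x y - ψ y)
    -- `ψ` is strongly c-concave with modulus `ω r = C r²` on `M × N`
    (hstrong : ∀ (x : M) (y z : N), x ∈ cSuperdiff c ψ y →
      ψ z - c x z ≤ ψ y - c x y - C * (dist y z) ^ 2)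
    (γ' : Measure (M × N)) (hγ' : IsCoupling γ' μ' ν')
    -- `γ'` is an optimal transport plan between `μ'` and `ν'`
    (hopt : ∀ η : Measure (M × N), IsCoupling η μ' ν' →
      (∫ p, c p.1 p.2 ∂γ') ≤ ∫ p, c p.1 p.2 ∂η) :
    W1prod (Measure.map (fun x => (x, T x)) μ) γ' ≤
      (W1 μ' μ + W1 ν ν') + Real.sqrt (2 * L * (W1 μ' μ + W1 ν ν') / C) := by
  classical
  -- Nonemptiness
  haveI hMne : Nonempty M := by
    by_contra h
    rw [not_nonempty_iff] at h
    have h1 : μ Set.univ = 1 := measure_univ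
    rw [Set.univ_eq_empty_iff.mpr h] at h1
    simp at h1
  haveI hNne : Nonempty N := by
    by_contra h
    rw [not_nonempty_iff] at h
    have h1 : ν Set.univ = 1 := measure_univ
    rw [Set.univ_eq_empty_iff.mpr h] at h1
    simp at h1
  obtain ⟨x₀⟩ := hMne
  obtain ⟨y₀⟩ := hNne
  haveI : Nonempty M := ⟨x₀⟩
  haveI : Nonempty N := ⟨y₀⟩
  -- continuity of the cost
  have hc : Continuous fun p : M × N => c p.1 p.2 := by
    have : LipschitzWith (Real.toNNReal (2 * L)) fun p : M × N => c p.1 p.2 := by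
      refine LipschitzWith.of_dist_le_mul fun p q => ?_
      have h1 := hlip p.1 q.1 p.2 q.2
      have h2 : dist p.1 q.1 ≤ dist p q := by rw [Prod.dist_eq]; exact le_max_left _ _
      have h3 : dist p.2 q.2 ≤ dist p q := by rw [Prod.dist_eq]; exact le_max_right _ _
      have h4 : (Real.toNNReal (2 * L) : ℝ) = 2 * L := Real.coe_toNNReal _ (by linarith)
      rw [Real.dist_eq, h4]
      nlinarith [dist_nonneg (x := p.1) (y := q.1), dist_nonneg (x := p.2) (y := q.2)]
    exact this.continuous
  have hcm : Measurable fun p : M × N => c p.1 p.2 := hc.measurable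
  -- diameters and bounds
  set dM := Metric.diam (Set.univ : Set M) with hdM
  set dN := Metric.diam (Set.univ : Set N) with hdN
  have hdistM : ∀ x x' : M, dist x x' ≤ dM :=
    fun x x' => Metric.dist_le_diam_of_mem isCompact_univ.isBounded trivial trivial
  have hdistN : ∀ y y' : N, dist y y' ≤ dN :=
    fun y y' => Metric.dist_le_diam_of_mem isCompact_univ.isBounded trivial trivial
  have hdM0 : 0 ≤ dM := Metric.diam_nonneg
  have hdN0 : 0 ≤ dN := Metric.diam_nonneg
  set Kc := |c x₀ y₀| + L * (dM + dN) with hKc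
  have hcb : ∀ x y, |c x y| ≤ Kc := by
    intro x y
    have h1 := hlip x x₀ y y₀
    have h2 := hdistM x x₀
    have h3 := hdistN y y₀
    have h4 : |c x y| ≤ |c x₀ y₀| + |c x y - c x₀ y₀| := by
      have := abs_add_le (c x₀ y₀) (c x y - c x₀ y₀)
      simpa using this
    have h5 : L * (dist x x₀ + dist y y₀) ≤ L * (dM + dN) := by nlinarith
    rw [hKc]; linarith
  -- the potential Ψ
  have hsup : ∀ x : M, x ∈ cSuperdiff c ψ (T x) := by
    intro x z
    have := hind x z
    linarith
  have hkey : ∀ (x : M) (z : N), ψ z ≤ c x z - (c x (T x) - ψ (T x)) - C * dist (T x) z ^ 2 := by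
    intro x z
    have := hstrong x (T x) z (hsup x)
    linarith
  set Ψ : N → ℝ := fun z => ⨅ x : M, (c x z - (c x (T x) - ψ (T x)) - C * dist (T x) z ^ 2)
    with hΨdef
  have hbddΨ : ∀ z : N,
      BddBelow (Set.range fun x : M => c x z - (c x (T x) - ψ (T x)) - C * dist (T x) z ^ 2) := by
    intro z
    refine ⟨ψ z, ?_⟩
    rintro r ⟨x, rfl⟩
    exact hkey x z
  have hΨle : ∀ (x : M) (z : N),
      Ψ z ≤ c x z - (c x (T x) - ψ (T x)) - C * dist (T x) z ^ 2 := by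
    intro x z
    rw [hΨdef]
    exact ciInf_le (hbddΨ z) x
  have hψΨ : ∀ z, ψ z ≤ Ψ z := by
    intro z
    rw [hΨdef]
    exact le_ciInf fun x => hkey x z
  have hΨT : ∀ x : M, Ψ (T x) = ψ (T x) := by
    intro x
    refine le_antisymm ?_ (hψΨ _)
    have h := hΨle x (T x)
    rw [dist_self] at h
    norm_num at h
    linarith
  have hP3 : ∀ (x : M) (z : N),
      Ψ z - c x z ≤ Ψ (T x) - c x (T x) - C * dist (T x) z ^ 2 := by
    intro x z
    have h := hΨle x z
    rw [hΨT x]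
    linarith
  -- Ψ is Lipschitz
  set K₀ := L + C * (2 * dN) with hK₀def
  have hK₀ : 0 ≤ K₀ := by
    rw [hK₀def]
    have : 0 ≤ C * (2 * dN) := mul_nonneg hC.le (by linarith)
    linarith
  have hΨlip : ∀ z w : N, Ψ z ≤ Ψ w + K₀ * dist z w := by
    intro z w
    have hx : ∀ x : M,
        Ψ z ≤ (c x w - (c x (T x) - ψ (T x)) - C * dist (T x) w ^ 2) + K₀ * dist z w := by
      intro x
      have h1 := hΨle x z
      have h2 : c x z ≤ c x w + L * dist z w := by
        have h := hlip x x z w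
        rw [dist_self] at h
        have := abs_le.1 h
        have h0 : L * (0 + dist z w) = L * dist z w := by ring
        rw [h0] at this
        linarith [this.1, this.2]
      have h3 : dist (T x) w ^ 2 ≤ dist (T x) z ^ 2 + 2 * dN * dist z w := by
        have h5 : dist (T x) w ≤ dist (T x) z + dist z w := dist_triangle _ _ _
        have h6 := hdistN (T x) w
        have h7 := hdistN (T x) z
        nlinarith [dist_nonneg (x := T x) (y := z), dist_nonneg (x := z) (y := w),
          dist_nonneg (x := T x) (y := w)]
      have h8 : C * dist (T x) w ^ 2 ≤ C * dist (T x) z ^ 2 + C * (2 * dN) * dist z w := by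
        nlinarith [hC.le]
      rw [hK₀def]
      nlinarith [dist_nonneg (x := z) (y := w), hL]
    have h9 : Ψ z - K₀ * dist z w ≤ Ψ w := by
      rw [hΨdef]
      exact le_ciInf fun x => by linarith [hx x]
    linarith
  have hΨabs : ∀ z w : N, |Ψ z - Ψ w| ≤ K₀ * dist z w := by
    intro z w
    rw [abs_le]
    constructor
    · have := hΨlip w z
      rw [dist_comm w z] at this
      linarith
    · linarith [hΨlip z w]
  have hΨc : Continuous Ψ := by
    refine (LipschitzWith.of_dist_le_mul (K := Real.toNNReal K₀) fun z w => ?_).continuous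
    rw [Real.dist_eq, Real.coe_toNNReal _ hK₀]
    exact hΨabs z w
  set KΨ := |Ψ y₀| + K₀ * dN with hKΨdef
  have hΨb : ∀ z, |Ψ z| ≤ KΨ := by
    intro z
    have h1 := hΨlip z y₀
    have h2 := hΨlip y₀ z
    rw [dist_comm y₀ z] at h2
    have h3 : K₀ * dist z y₀ ≤ K₀ * dN := mul_le_mul_of_nonneg_left (hdistN _ _) hK₀
    have h4 := le_abs_self (Ψ y₀)
    have h5 := neg_abs_le (Ψ y₀)
    rw [hKΨdef, abs_le]
    constructor <;> linarith
  -- measurability toolkit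
  have mcx : Measurable fun x : M => c x (T x) := hcm.comp (measurable_id.prodMk hTm)
  -- MAIN quantitative estimate for arbitrary couplings
  have main : ∀ (A : Measure (M × M)) (B : Measure (N × N)),
      IsCoupling A μ' μ → IsCoupling B ν ν' →
      W1prod (Measure.map (fun x => (x, T x)) μ) γ' ≤
        ((∫ p, dist p.1 p.2 ∂A) + (∫ p, dist p.1 p.2 ∂B)) +
          Real.sqrt (2 * L * ((∫ p, dist p.1 p.2 ∂A) + (∫ p, dist p.1 p.2 ∂B)) / C) := by
    intro A B hA hB
    haveI : IsProbabilityMeasure A := ⟨by rw [← Measure.fst_univ, hA.1]; exact measure_univ⟩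
    haveI : IsProbabilityMeasure B := ⟨by rw [← Measure.fst_univ, hB.1]; exact measure_univ⟩
    haveI : IsProbabilityMeasure γ' := ⟨by rw [← Measure.fst_univ, hγ'.1]; exact measure_univ⟩
    set γT := Measure.map (fun x => (x, T x)) μ with hγT
    haveI : IsProbabilityMeasure γT :=
      Measure.isProbabilityMeasure_map ((measurable_id.prodMk hTm).aemeasurable)
    haveI : IsProbabilityMeasure (B.map Prod.swap) :=
      Measure.isProbabilityMeasure_map measurable_swap.aemeasurable
    haveI : IsProbabilityMeasure (A.map Prod.swap) :=
      Measure.isProbabilityMeasure_map measurable_swap.aemeasurable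
    -- first glued measure
    set m := γ' ⊗ₘ ((A.condKernel.comap Prod.fst measurable_fst) ×ₖ
      ((B.map Prod.swap).condKernel.comap Prod.snd measurable_snd)) with hm
    haveI : IsProbabilityMeasure m := by rw [hm]; infer_instance
    have hm1 : m.map (fun p => (p.1.1, p.2.1)) = A := by
      rw [hm, glue_fst, hγ'.1, ← hA.1]
      exact A.disintegrate A.condKernel
    have hm2 : m.map (fun p => (p.1.2, p.2.2)) = B.map Prod.swap := by
      rw [hm, glue_snd, hγ'.2]
      have h1 : (B.map Prod.swap).fst = ν' := by rw [Measure.fst_map_swap, hB.2]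
      rw [← h1]
      exact (B.map Prod.swap).disintegrate _
    have hmx : m.map (fun p => p.2.1) = μ := by
      have h : (m.map (fun p : (M × N) × M × N => (p.1.1, p.2.1))).map Prod.snd
          = m.map (fun p => p.2.1) := Measure.map_map measurable_snd (by fun_prop)
      rw [← h, hm1, ← Measure.snd, hA.2]
    have hmy : m.map (fun p => p.2.2) = ν := by
      have h : (m.map (fun p : (M × N) × M × N => (p.1.2, p.2.2))).map Prod.snd
          = m.map (fun p => p.2.2) := Measure.map_map measurable_snd (by fun_prop)
      rw [← h, hm2, ← Measure.snd, Measure.snd_map_swap, hB.1]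
    have hmfst : m.fst = γ' := by rw [hm]; exact Measure.fst_compProd γ' _
    -- the candidate coupling π between γT and γ'
    have hπm : Measurable fun p : (M × N) × M × N => ((p.2.1, T p.2.1), p.1) := by
      refine Measurable.prodMk (Measurable.prodMk ?_ ?_) measurable_fst
      · exact measurable_snd.fst
      · exact hTm.comp measurable_snd.fst
    set π := m.map (fun p => ((p.2.1, T p.2.1), p.1)) with hπ
    have hπfst : π.fst = γT := by
      have h1 : π.fst = m.map (fun p : (M × N) × M × N => (p.2.1, T p.2.1)) :=
        Measure.map_map measurable_fst hπm
      have h3 : (m.map (fun p : (M × N) × M × N => p.2.1)).map (fun x => (x, T x))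
          = m.map (fun p : (M × N) × M × N => (p.2.1, T p.2.1)) :=
        Measure.map_map (measurable_id.prodMk hTm) (by fun_prop)
      rw [h1, ← h3, hmx, hγT]
    have hπsnd : π.snd = γ' := by
      have h1 : π.snd = m.map (fun p : (M × N) × M × N => p.1) :=
        Measure.map_map measurable_snd hπm
      rw [h1]
      exact hmfst
    -- second glued measure (for the competitor plan)
    have hγTfst : γT.fst = μ := by
      rw [hγT, Measure.fst_map_prodMk hTm, Measure.map_id']
    have hγTsnd : γT.snd = ν := by
      rw [hγT, Measure.snd_map_prodMk (X := fun x : M => x) measurable_id]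
      exact hpush
    set m₂ := γT ⊗ₘ (((A.map Prod.swap).condKernel.comap Prod.fst measurable_fst) ×ₖ
      (B.condKernel.comap Prod.snd measurable_snd)) with hm₂
    haveI : IsProbabilityMeasure m₂ := by rw [hm₂]; infer_instance
    have hm₂1 : m₂.map (fun p => (p.1.1, p.2.1)) = A.map Prod.swap := by
      rw [hm₂, glue_fst, hγTfst]
      have h1 : (A.map Prod.swap).fst = μ := by rw [Measure.fst_map_swap, hA.2]
      rw [← h1]
      exact (A.map Prod.swap).disintegrate _
    have hm₂2 : m₂.map (fun p => (p.1.2, p.2.2)) = B := by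
      rw [hm₂, glue_snd, hγTsnd, ← hB.1]
      exact B.disintegrate _
    have hm₂fst : m₂.fst = γT := by rw [hm₂]; exact Measure.fst_compProd γT _
    set η' := m₂.snd with hη'def
    have hη'c : IsCoupling η' μ' ν' := by
      constructor
      · have h1 : η'.fst = m₂.map (fun p : (M × N) × M × N => p.2.1) :=
          Measure.map_map measurable_fst measurable_snd
        have h2 : (m₂.map (fun p : (M × N) × M × N => (p.1.1, p.2.1))).map Prod.snd
            = m₂.map (fun p => p.2.1) := Measure.map_map measurable_snd (by fun_prop)
        rw [h1, ← h2, hm₂1, ← Measure.snd, Measure.snd_map_swap, hA.1]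
      · have h1 : η'.snd = m₂.map (fun p : (M × N) × M × N => p.2.2) :=
          Measure.map_map measurable_snd measurable_snd
        have h2 : (m₂.map (fun p : (M × N) × M × N => (p.1.2, p.2.2))).map Prod.snd
            = m₂.map (fun p => p.2.2) := Measure.map_map measurable_snd (by fun_prop)
        rw [h1, ← h2, hm₂2, ← Measure.snd, hB.2]
    -- integrability helpers
    have hintm : ∀ {f : (M × N) × M × N → ℝ}, Measurable f → ∀ K : ℝ,
        (∀ q, |f q| ≤ K) → Integrable f m :=
      fun hf K hK => aux_integrable_of_bound hf.aestronglyMeasurable K hK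
    have hintm₂ : ∀ {f : (M × N) × M × N → ℝ}, Measurable f → ∀ K : ℝ,
        (∀ q, |f q| ≤ K) → Integrable f m₂ :=
      fun hf K hK => aux_integrable_of_bound hf.aestronglyMeasurable K hK
    have hdc : Continuous fun r : M × M => dist r.1 r.2 := continuous_fst.dist continuous_snd
    have hdcN : Continuous fun r : N × N => dist r.1 r.2 := continuous_fst.dist continuous_snd
    have mdT : Measurable fun q : (M × N) × M × N => dist (T q.2.1) q.2.2 :=
      (hTm.comp measurable_snd.fst).dist measurable_snd.snd
    have hi_c12 : Integrable (fun q : (M × N) × M × N => c q.1.1 q.1.2) m :=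
      hintm (hcm.comp measurable_fst) Kc (fun q => hcb _ _)
    have hi_c22 : Integrable (fun q : (M × N) × M × N => c q.2.1 q.2.2) m :=
      hintm (hcm.comp measurable_snd) Kc (fun q => hcb _ _)
    have hi_cT : Integrable (fun q : (M × N) × M × N => c q.2.1 (T q.2.1)) m :=
      hintm (mcx.comp measurable_snd.fst) Kc (fun q => hcb _ _)
    have hi_d1 : Integrable (fun q : (M × N) × M × N => dist q.1.1 q.2.1) m :=
      hintm (measurable_fst.fst.dist measurable_snd.fst) dM
        (fun q => by rw [abs_of_nonneg dist_nonneg]; exact hdistM _ _)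
    have hi_d2 : Integrable (fun q : (M × N) × M × N => dist q.1.2 q.2.2) m :=
      hintm (measurable_fst.snd.dist measurable_snd.snd) dN
        (fun q => by rw [abs_of_nonneg dist_nonneg]; exact hdistN _ _)
    have hi_dT : Integrable (fun q : (M × N) × M × N => dist (T q.2.1) q.2.2) m :=
      hintm mdT dN (fun q => by rw [abs_of_nonneg dist_nonneg]; exact hdistN _ _)
    have hi_dT2 : Integrable (fun q : (M × N) × M × N => dist (T q.2.1) q.2.2 ^ 2) m :=
      hintm (mdT.pow_const 2) (dN ^ 2) (fun q => by
        rw [abs_of_nonneg (by positivity)]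
        exact pow_le_pow_left₀ dist_nonneg (hdistN _ _) 2)
    have hi_Ψ2 : Integrable (fun q : (M × N) × M × N => Ψ q.2.2) m :=
      hintm (hΨc.measurable.comp measurable_snd.snd) KΨ (fun q => hΨb _)
    have hi_ΨT : Integrable (fun q : (M × N) × M × N => Ψ (T q.2.1)) m :=
      hintm ((hΨc.measurable.comp hTm).comp measurable_snd.fst) KΨ (fun q => hΨb _)
    have hi2_c12 : Integrable (fun q : (M × N) × M × N => c q.1.1 q.1.2) m₂ :=
      hintm₂ (hcm.comp measurable_fst) Kc (fun q => hcb _ _)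
    have hi2_c22 : Integrable (fun q : (M × N) × M × N => c q.2.1 q.2.2) m₂ :=
      hintm₂ (hcm.comp measurable_snd) Kc (fun q => hcb _ _)
    have hi2_d1 : Integrable (fun q : (M × N) × M × N => dist q.1.1 q.2.1) m₂ :=
      hintm₂ (measurable_fst.fst.dist measurable_snd.fst) dM
        (fun q => by rw [abs_of_nonneg dist_nonneg]; exact hdistM _ _)
    have hi2_d2 : Integrable (fun q : (M × N) × M × N => dist q.1.2 q.2.2) m₂ :=
      hintm₂ (measurable_fst.snd.dist measurable_snd.snd) dN
        (fun q => by rw [abs_of_nonneg dist_nonneg]; exact hdistN _ _)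
    have i1 : Integrable (fun q : (M × N) × M × N => c q.2.1 q.2.2 - c q.2.1 (T q.2.1)) m :=
      hi_c22.sub hi_cT
    have i2 : Integrable (fun q : (M × N) × M × N => Ψ q.2.2 - Ψ (T q.2.1)) m :=
      hi_Ψ2.sub hi_ΨT
    have i3 : Integrable (fun q : (M × N) × M × N => dist q.1.1 q.2.1 + dist q.1.2 q.2.2) m :=
      hi_d1.add hi_d2
    have i4 : Integrable
        (fun q : (M × N) × M × N => L * (dist q.1.1 q.2.1 + dist q.1.2 q.2.2)) m :=
      i3.const_mul L
    have i10 : Integrable (fun q : (M × N) × M × N =>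
        c q.1.1 q.1.2 + L * (dist q.1.1 q.2.1 + dist q.1.2 q.2.2)) m := hi_c12.add i4
    have i3b : Integrable (fun q : (M × N) × M × N => dist q.1.1 q.2.1 + dist q.1.2 q.2.2) m₂ :=
      hi2_d1.add hi2_d2
    have i4b : Integrable
        (fun q : (M × N) × M × N => L * (dist q.1.1 q.2.1 + dist q.1.2 q.2.2)) m₂ :=
      i3b.const_mul L
    have i10b : Integrable (fun q : (M × N) × M × N =>
        c q.1.1 q.1.2 + L * (dist q.1.1 q.2.1 + dist q.1.2 q.2.2)) m₂ := hi2_c12.add i4b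
    have i8 : Integrable
        (fun q : (M × N) × M × N => dist (T q.2.1) q.2.2 + dist q.1.2 q.2.2) m :=
      hi_dT.add hi_d2
    have i9 : Integrable (fun q : (M × N) × M × N =>
        dist q.1.1 q.2.1 + (dist (T q.2.1) q.2.2 + dist q.1.2 q.2.2)) m := hi_d1.add i8
    -- integral identities over m
    have E1 : ∫ q, dist q.1.1 q.2.1 ∂m = ∫ p, dist p.1 p.2 ∂A := by
      rw [← hm1]
      exact (integral_map (measurable_fst.fst.prodMk measurable_snd.fst).aemeasurable
        hdc.aestronglyMeasurable).symm
    have E2 : ∫ q, dist q.1.2 q.2.2 ∂m = ∫ p, dist p.1 p.2 ∂B := by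
      have h1 : ∫ x, dist x.1 x.2 ∂(m.map (fun p : (M × N) × M × N => (p.1.2, p.2.2)))
          = ∫ q, dist q.1.2 q.2.2 ∂m :=
        integral_map (measurable_fst.snd.prodMk measurable_snd.snd).aemeasurable
          hdcN.aestronglyMeasurable
      have h2 : ∫ x, dist x.1 x.2 ∂(B.map Prod.swap) = ∫ p, dist p.2 p.1 ∂B :=
        integral_map measurable_swap.aemeasurable hdcN.aestronglyMeasurable
      rw [← h1, hm2, h2]
      exact integral_congr_ae (Filter.Eventually.of_forall fun p => dist_comm _ _)
    have E3 : ∫ q, c q.1.1 q.1.2 ∂m = ∫ p, c p.1 p.2 ∂γ' := by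
      rw [← hmfst]
      exact (integral_map measurable_fst.aemeasurable hc.aestronglyMeasurable).symm
    have E4 : ∫ q, c q.2.1 (T q.2.1) ∂m = ∫ p, c p.1 p.2 ∂γT := by
      have h1 : ∫ x, c x (T x) ∂μ = ∫ q, c q.2.1 (T q.2.1) ∂m := by
        rw [← hmx]
        exact integral_map measurable_snd.fst.aemeasurable mcx.aestronglyMeasurable
      have h2 : ∫ p, c p.1 p.2 ∂γT = ∫ x, c x (T x) ∂μ := by
        rw [hγT]
        exact integral_map ((measurable_id.prodMk hTm).aemeasurable) hc.aestronglyMeasurable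
      rw [h2, h1]
    have E5a : ∫ q, Ψ q.2.2 ∂m = ∫ z, Ψ z ∂ν := by
      rw [← hmy]
      exact (integral_map measurable_snd.snd.aemeasurable hΨc.aestronglyMeasurable).symm
    have E5b : ∫ q, Ψ (T q.2.1) ∂m = ∫ z, Ψ z ∂ν := by
      have h1 : ∫ x, Ψ (T x) ∂μ = ∫ q, Ψ (T q.2.1) ∂m := by
        rw [← hmx]
        exact integral_map measurable_snd.fst.aemeasurable
          ((hΨc.measurable.comp hTm).aestronglyMeasurable)
      have h2 : ∫ z, Ψ z ∂ν = ∫ x, Ψ (T x) ∂μ := by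
        rw [← hpush]
        exact integral_map hTm.aemeasurable hΨc.aestronglyMeasurable
      rw [h2]
      exact h1.symm
    -- the suboptimality-gap bound
    have hgap : C * ∫ q, dist (T q.2.1) q.2.2 ^ 2 ∂m
        ≤ (∫ q, c q.2.1 q.2.2 ∂m) - ∫ p, c p.1 p.2 ∂γT := by
      have hpt : ∀ q : (M × N) × M × N, C * dist (T q.2.1) q.2.2 ^ 2
          ≤ c q.2.1 q.2.2 - c q.2.1 (T q.2.1) - (Ψ q.2.2 - Ψ (T q.2.1)) := by
        intro q
        have := hP3 q.2.1 q.2.2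
        linarith
      have hI : ∫ q, C * dist (T q.2.1) q.2.2 ^ 2 ∂m
          ≤ ∫ q, (c q.2.1 q.2.2 - c q.2.1 (T q.2.1) - (Ψ q.2.2 - Ψ (T q.2.1))) ∂m :=
        integral_mono (hi_dT2.const_mul C) (i1.sub i2) hpt
      rw [integral_const_mul, integral_sub i1 i2,
        integral_sub hi_c22 hi_cT, integral_sub hi_Ψ2 hi_ΨT, E5a, E5b, E4] at hI
      linarith
    -- Lipschitz comparison of costs
    have hptc : ∀ q : (M × N) × M × N,
        c q.2.1 q.2.2 ≤ c q.1.1 q.1.2 + L * (dist q.1.1 q.2.1 + dist q.1.2 q.2.2) := by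
      intro q
      have h := hlip q.2.1 q.1.1 q.2.2 q.1.2
      have h1 := (abs_le.1 h).2
      rw [dist_comm q.2.1 q.1.1, dist_comm q.2.2 q.1.2] at h1
      linarith
    have hLc : ∫ q, c q.2.1 q.2.2 ∂m
        ≤ (∫ p, c p.1 p.2 ∂γ')
          + L * ((∫ p, dist p.1 p.2 ∂A) + (∫ p, dist p.1 p.2 ∂B)) := by
      have hI := integral_mono hi_c22 i10 hptc
      rw [integral_add hi_c12 i4, integral_const_mul,
        integral_add hi_d1 hi_d2, E1, E2, E3] at hI
      exact hI
    -- the competitor plan and optimality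
    have F1 : ∫ q, dist q.1.1 q.2.1 ∂m₂ = ∫ p, dist p.1 p.2 ∂A := by
      have h1 : ∫ x, dist x.1 x.2 ∂(m₂.map (fun p : (M × N) × M × N => (p.1.1, p.2.1)))
          = ∫ q, dist q.1.1 q.2.1 ∂m₂ :=
        integral_map (measurable_fst.fst.prodMk measurable_snd.fst).aemeasurable
          hdc.aestronglyMeasurable
      have h2 : ∫ x, dist x.1 x.2 ∂(A.map Prod.swap) = ∫ p, dist p.2 p.1 ∂A :=
        integral_map measurable_swap.aemeasurable hdc.aestronglyMeasurable
      rw [← h1, hm₂1, h2]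
      exact integral_congr_ae (Filter.Eventually.of_forall fun p => dist_comm _ _)
    have F2 : ∫ q, dist q.1.2 q.2.2 ∂m₂ = ∫ p, dist p.1 p.2 ∂B := by
      rw [← hm₂2]
      exact (integral_map (measurable_fst.snd.prodMk measurable_snd.snd).aemeasurable
        hdcN.aestronglyMeasurable).symm
    have F3 : ∫ q, c q.1.1 q.1.2 ∂m₂ = ∫ p, c p.1 p.2 ∂γT := by
      rw [← hm₂fst]
      exact (integral_map measurable_fst.aemeasurable hc.aestronglyMeasurable).symm
    have F4 : ∫ q, c q.2.1 q.2.2 ∂m₂ = ∫ p, c p.1 p.2 ∂η' := by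
      rw [hη'def]
      exact (integral_map measurable_snd.aemeasurable hc.aestronglyMeasurable).symm
    have hLc2 : ∫ p, c p.1 p.2 ∂η'
        ≤ (∫ p, c p.1 p.2 ∂γT)
          + L * ((∫ p, dist p.1 p.2 ∂A) + (∫ p, dist p.1 p.2 ∂B)) := by
      have hI := integral_mono hi2_c22 i10b hptc
      rw [integral_add hi2_c12 i4b, integral_const_mul,
        integral_add hi2_d1 hi2_d2, F1, F2, F3, F4] at hI
      exact hI
    have hoptη := hopt η' hη'c
    -- combining: quadratic bound
    have hd2le : ∫ q, dist (T q.2.1) q.2.2 ^ 2 ∂m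
        ≤ 2 * L * ((∫ p, dist p.1 p.2 ∂A) + (∫ p, dist p.1 p.2 ∂B)) / C := by
      rw [le_div_iff₀ hC, mul_comm]
      linarith
    -- Cauchy-Schwarz
    have hCS : (∫ q, dist (T q.2.1) q.2.2 ∂m) ^ 2 ≤ ∫ q, dist (T q.2.1) q.2.2 ^ 2 ∂m := by
      obtain ⟨a, ha⟩ : ∃ a : ℝ, a = ∫ q, dist (T q.2.1) q.2.2 ∂m := ⟨_, rfl⟩
      rw [← ha]
      have h1 : 0 ≤ ∫ q, (dist (T q.2.1) q.2.2 - a) ^ 2 ∂m :=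
        integral_nonneg fun q => sq_nonneg _
      have h2 : ∫ q, (dist (T q.2.1) q.2.2 - a) ^ 2 ∂m
          = ∫ q, (dist (T q.2.1) q.2.2 ^ 2 - 2 * a * dist (T q.2.1) q.2.2 + a ^ 2) ∂m :=
        integral_congr_ae (Filter.Eventually.of_forall fun q => by ring)
      have h3 : ∫ q, (dist (T q.2.1) q.2.2 ^ 2 - 2 * a * dist (T q.2.1) q.2.2 + a ^ 2) ∂m
          = (∫ q, dist (T q.2.1) q.2.2 ^ 2 ∂m)
              - 2 * a * (∫ q, dist (T q.2.1) q.2.2 ∂m) + a ^ 2 := by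
        have i7 : Integrable (fun q : (M × N) × M × N =>
            dist (T q.2.1) q.2.2 ^ 2 - 2 * a * dist (T q.2.1) q.2.2) m :=
          hi_dT2.sub (hi_dT.const_mul (2 * a))
        rw [integral_add i7 (integrable_const _),
          integral_sub hi_dT2 (hi_dT.const_mul (2 * a)), integral_const_mul, integral_const]
        simp [measure_univ]
      rw [h2, h3, ← ha] at h1
      have h4 : a ^ 2 = a * a := pow_two a
      linarith [h1]
    -- final estimate on the transport plan π
    have hptf : ∀ q : (M × N) × M × N,
        dist q.2.1 q.1.1 + dist (T q.2.1) q.1.2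
          ≤ dist q.1.1 q.2.1 + (dist (T q.2.1) q.2.2 + dist q.1.2 q.2.2) := by
      intro q
      have h1 : dist q.2.1 q.1.1 = dist q.1.1 q.2.1 := dist_comm _ _
      have h2 : dist (T q.2.1) q.1.2 ≤ dist (T q.2.1) q.2.2 + dist q.2.2 q.1.2 :=
        dist_triangle _ _ _
      rw [dist_comm q.2.2 q.1.2] at h2
      linarith
    have hi_sum : Integrable
        (fun q : (M × N) × M × N => dist q.2.1 q.1.1 + dist (T q.2.1) q.1.2) m :=
      hintm ((measurable_snd.fst.dist measurable_fst.fst).add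
          ((hTm.comp measurable_snd.fst).dist measurable_fst.snd)) (dM + dN)
        (fun q => by
          rw [abs_of_nonneg (add_nonneg dist_nonneg dist_nonneg)]
          exact add_le_add (hdistM _ _) (hdistN _ _))
    have hval : ∫ qq, (dist qq.1.1 qq.2.1 + dist qq.1.2 qq.2.2) ∂π
        = ∫ q, (dist q.2.1 q.1.1 + dist (T q.2.1) q.1.2) ∂m := by
      rw [hπ]
      exact integral_map hπm.aemeasurable
        (((continuous_fst.fst.dist continuous_snd.fst).add
          (continuous_fst.snd.dist continuous_snd.snd)).aestronglyMeasurable)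
    have hsq : ∫ q, dist (T q.2.1) q.2.2 ∂m
        ≤ Real.sqrt (2 * L * ((∫ p, dist p.1 p.2 ∂A) + (∫ p, dist p.1 p.2 ∂B)) / C) := by
      have h0 : 0 ≤ ∫ q, dist (T q.2.1) q.2.2 ∂m := integral_nonneg fun q => dist_nonneg
      calc ∫ q, dist (T q.2.1) q.2.2 ∂m
          = Real.sqrt ((∫ q, dist (T q.2.1) q.2.2 ∂m) ^ 2) := (Real.sqrt_sq h0).symm
        _ ≤ Real.sqrt (2 * L * ((∫ p, dist p.1 p.2 ∂A) + (∫ p, dist p.1 p.2 ∂B)) / C) :=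
            Real.sqrt_le_sqrt (le_trans hCS hd2le)
    have hmain2 : ∫ q, (dist q.2.1 q.1.1 + dist (T q.2.1) q.1.2) ∂m
        ≤ ((∫ p, dist p.1 p.2 ∂A) + (∫ p, dist p.1 p.2 ∂B))
          + Real.sqrt (2 * L * ((∫ p, dist p.1 p.2 ∂A) + (∫ p, dist p.1 p.2 ∂B)) / C) := by
      have hI := integral_mono hi_sum i9 hptf
      rw [integral_add hi_d1 i8, integral_add hi_dT hi_d2, E1, E2] at hI
      linarith
    -- conclude via the infimum
    have hbddS : BddBelow {r | ∃ π₀ : Measure ((M × N) × M × N),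
        IsCoupling π₀ γT γ' ∧ r = ∫ q, (dist q.1.1 q.2.1 + dist q.1.2 q.2.2) ∂π₀} := by
      refine ⟨0, ?_⟩
      rintro r ⟨π₀, _, rfl⟩
      exact integral_nonneg fun q => add_nonneg dist_nonneg dist_nonneg
    have hmemS : (∫ qq, (dist qq.1.1 qq.2.1 + dist qq.1.2 qq.2.2) ∂π)
        ∈ {r | ∃ π₀ : Measure ((M × N) × M × N),
            IsCoupling π₀ γT γ' ∧ r = ∫ q, (dist q.1.1 q.2.1 + dist q.1.2 q.2.2) ∂π₀} :=
      ⟨π, ⟨hπfst, hπsnd⟩, rfl⟩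
    have hle : W1prod γT γ' ≤ ∫ qq, (dist qq.1.1 qq.2.1 + dist qq.1.2 qq.2.2) ∂π :=
      csInf_le hbddS hmemS
    rw [hval] at hle
    exact le_trans hle hmain2
  -- approximate by near-optimal couplings and pass to the limit
  have hSa_ne : Set.Nonempty {r | ∃ γ₀ : Measure (M × M), IsCoupling γ₀ μ' μ ∧
      r = ∫ p, dist p.1 p.2 ∂γ₀} :=
    ⟨∫ p, dist p.1 p.2 ∂(μ'.prod μ), μ'.prod μ, ⟨Measure.fst_prod, Measure.snd_prod⟩, rfl⟩
  have hSb_ne : Set.Nonempty {r | ∃ γ₀ : Measure (N × N), IsCoupling γ₀ ν ν' ∧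
      r = ∫ p, dist p.1 p.2 ∂γ₀} :=
    ⟨∫ p, dist p.1 p.2 ∂(ν.prod ν'), ν.prod ν', ⟨Measure.fst_prod, Measure.snd_prod⟩, rfl⟩
  set ε := W1 μ' μ + W1 ν ν' with hε
  have hgc : Continuous fun δ : ℝ => (ε + 2 * δ) + Real.sqrt (2 * L * (ε + 2 * δ) / C) := by
    have h1 : Continuous fun δ : ℝ => ε + 2 * δ :=
      continuous_const.add (continuous_const.mul continuous_id)
    exact h1.add (Real.continuous_sqrt.comp ((continuous_const.mul h1).div_const C))
  have htend : Filter.Tendsto (fun δ : ℝ => (ε + 2 * δ) + Real.sqrt (2 * L * (ε + 2 * δ) / C))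
      (nhdsWithin 0 (Set.Ioi 0)) (nhds (ε + Real.sqrt (2 * L * ε / C))) := by
    have h := (hgc.tendsto 0).mono_left
      (nhdsWithin_le_nhds : nhdsWithin (0:ℝ) (Set.Ioi 0) ≤ nhds 0)
    simpa using h
  have hev : ∀ᶠ δ in nhdsWithin (0:ℝ) (Set.Ioi 0),
      W1prod (Measure.map (fun x => (x, T x)) μ) γ'
        ≤ (ε + 2 * δ) + Real.sqrt (2 * L * (ε + 2 * δ) / C) := by
    filter_upwards [self_mem_nhdsWithin] with δ hδ
    have hδ0 : (0:ℝ) < δ := hδ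
    obtain ⟨ra, ⟨A, hAc, hrA⟩, hra⟩ :=
      exists_lt_of_csInf_lt hSa_ne (show W1 μ' μ < W1 μ' μ + δ by linarith)
    obtain ⟨rb, ⟨B, hBc, hrB⟩, hrb⟩ :=
      exists_lt_of_csInf_lt hSb_ne (show W1 ν ν' < W1 ν ν' + δ by linarith)
    have e1 : (∫ p, dist p.1 p.2 ∂A) < W1 μ' μ + δ := by rw [← hrA]; exact hra
    have e2 : (∫ p, dist p.1 p.2 ∂B) < W1 ν ν' + δ := by rw [← hrB]; exact hrb
    have h2 := main A B hAc hBc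
    have hsum : (∫ p, dist p.1 p.2 ∂A) + (∫ p, dist p.1 p.2 ∂B) ≤ ε + 2 * δ := by
      rw [hε]; linarith
    have hs : Real.sqrt (2 * L * ((∫ p, dist p.1 p.2 ∂A) + (∫ p, dist p.1 p.2 ∂B)) / C)
        ≤ Real.sqrt (2 * L * (ε + 2 * δ) / C) := by
      apply Real.sqrt_le_sqrt
      exact (div_le_div_iff_of_pos_right hC).mpr (by nlinarith)
    linarith
  exact ge_of_tendsto htend hev
end
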